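/- arXiv:2109.04024 — 9 statements merged into one kernel-verified Lean document; each statement's English description precedes it below -/
import Mathlib

section
/- Let X and U be finite nonempty sets, K a positive integer, and L_Q ≥ 0. Let π = (π_k)_{k∈[K]} be a family of decision rules π_k : X × P(X×[K]) → P(U) such that for every x ∈ X, k ∈ [K] and all μ₁, μ₂ ∈ P(X×[K]), |π_k(x,μ₁) − π_k(x,μ₂)|₁ ≤ L_Q·|μ₁ − μ₂|₁. Define ν^MF(μ,π) ∈ P(U×[K]) by ν^MF(μ,π)(u,k) = Σ_{x∈X} π_k(x,μ)(u)·μ(x,k). Then for all μ, μ' ∈ P(X×[K]), |ν^MF(μ,π) − ν^MF(μ',π)|₁ ≤ (1 + L_Q)·|μ − μ'|₁. -/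
/-!
Write `p(μ)·μ − p(μ')·μ' = p(μ)·(μ − μ') + (p(μ) − p(μ'))·μ'` termwise. Since each `π_k(x, μ)`
sums to one, the first part costs at most `|μ − μ'|₁`; since `μ'` sums to one, the Lipschitz
bound makes the second part cost at most `L_Q·|μ − μ'|₁`.
-/

open Finset

/-- A probability distribution on a finite type, represented as a nonnegative
function summing to one. -/
def IsProb {A : Type*} [Fintype A] (μ : A → ℝ) : Prop :=
  (∀ a, 0 ≤ μ a) ∧ ∑ a, μ a = 1

/-- The L1 distance between two real-valued functions on a finite type. -/
noncomputable def l1 {A : Type*} [Fintype A] (μ ν : A → ℝ) : ℝ :=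
  ∑ a, |μ a - ν a|

lemma l1_prod_eq_sum {α β : Type*} [Fintype α] [Fintype β] (f g : α × β → ℝ) :
    l1 f g = ∑ b, l1 (fun a => f (a, b)) (fun a => g (a, b)) :=
  Fintype.sum_prod_type_right _

lemma sum_prod_eq_one_of_isProb {α β : Type*} [Fintype α] [Fintype β] {μ : α × β → ℝ}
    (hμ : IsProb μ) : ∑ b, ∑ a, μ (a, b) = 1 := by
  rw [← Fintype.sum_prod_type_right, hμ.2]

lemma l1_mixture_le {ι U : Type*} [Fintype ι] [Fintype U] {P Q : ι → U → ℝ} {a b : ι → ℝ}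
    (hP : ∀ i, IsProb (P i)) (hb : ∀ i, 0 ≤ b i) :
    l1 (fun u => ∑ i, P i u * a i) (fun u => ∑ i, Q i u * b i)
      ≤ l1 a b + ∑ i, b i * l1 (P i) (Q i) := by
  have pointwise : ∀ u, |∑ i, P i u * a i - ∑ i, Q i u * b i|
      ≤ ∑ i, (P i u * |a i - b i| + b i * |P i u - Q i u|) := fun u => by
    rw [← sum_sub_distrib]
    refine (abs_sum_le_sum_abs _ _).trans (sum_le_sum fun i _ => ?_)
    calc |P i u * a i - Q i u * b i|
        = |P i u * (a i - b i) + b i * (P i u - Q i u)| := by congr 1; ring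
      _ ≤ P i u * |a i - b i| + b i * |P i u - Q i u| := by
        refine (abs_add_le _ _).trans_eq ?_
        rw [abs_mul, abs_mul, abs_of_nonneg ((hP i).1 u), abs_of_nonneg (hb i)]
  calc l1 (fun u => ∑ i, P i u * a i) (fun u => ∑ i, Q i u * b i)
      ≤ ∑ u, ∑ i, (P i u * |a i - b i| + b i * |P i u - Q i u|) := sum_le_sum fun u _ => pointwise u
    _ = ∑ i, ((∑ u, P i u) * |a i - b i| + b i * l1 (P i) (Q i)) := by
        rw [sum_comm]
        simp only [sum_add_distrib, sum_mul, mul_sum, l1]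
    _ = l1 a b + ∑ i, b i * l1 (P i) (Q i) := by
        simp only [(hP _).2, one_mul, sum_add_distrib, l1]

theorem stmt0_general
    {X U : Type*} [Fintype X] [Fintype U]
    (K : ℕ) (LQ : ℝ)
    (pi : Fin K → X → (X × Fin K → ℝ) → U → ℝ)
    (hpiProb : ∀ k x μ, IsProb μ → IsProb (pi k x μ))
    (hpiLip : ∀ k x μ₁ μ₂, IsProb μ₁ → IsProb μ₂ →
      l1 (pi k x μ₁) (pi k x μ₂) ≤ LQ * l1 μ₁ μ₂)
    (nuMF : (X × Fin K → ℝ) → U × Fin K → ℝ)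
    (hnuMF : nuMF = fun μ q => ∑ x, pi q.2 x μ q.1 * μ (x, q.2))
    (μ μ' : X × Fin K → ℝ) (hμ : IsProb μ) (hμ' : IsProb μ') :
    l1 (nuMF μ) (nuMF μ') ≤ (1 + LQ) * l1 μ μ' := by
  subst hnuMF
  calc l1 _ _
      = ∑ k, l1 (fun u => ∑ x, pi k x μ u * μ (x, k)) (fun u => ∑ x, pi k x μ' u * μ' (x, k)) := by
        rw [l1_prod_eq_sum]
    _ ≤ ∑ k, (l1 (fun x => μ (x, k)) (fun x => μ' (x, k))
          + ∑ x, μ' (x, k) * l1 (pi k x μ) (pi k x μ')) :=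
        sum_le_sum fun k _ => l1_mixture_le (fun x => hpiProb k x μ hμ) (fun x => hμ'.1 _)
    _ ≤ ∑ k, (l1 (fun x => μ (x, k)) (fun x => μ' (x, k)) + ∑ x, μ' (x, k) * (LQ * l1 μ μ')) := by
        gcongr with k _ x _
        · exact hμ'.1 _
        · exact hpiLip k x μ μ' hμ hμ'
    _ = (1 + LQ) * l1 μ μ' := by
        rw [sum_add_distrib, ← l1_prod_eq_sum]
        simp only [← sum_mul, sum_prod_eq_one_of_isProb hμ']
        ring

theorem stmt0
    {X U : Type*} [Fintype X] [Fintype U] [Nonempty X] [Nonempty U]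
    (K : ℕ) (hK : 0 < K) (LQ : ℝ) (hLQ : 0 ≤ LQ)
    (pi : Fin K → X → (X × Fin K → ℝ) → U → ℝ)
    (hpiProb : ∀ k x μ, IsProb μ → IsProb (pi k x μ))
    (hpiLip : ∀ k x μ₁ μ₂, IsProb μ₁ → IsProb μ₂ →
      l1 (pi k x μ₁) (pi k x μ₂) ≤ LQ * l1 μ₁ μ₂)
    (nuMF : (X × Fin K → ℝ) → U × Fin K → ℝ)
    (hnuMF : nuMF = fun μ q => ∑ x, pi q.2 x μ q.1 * μ (x, q.2))
    (μ μ' : X × Fin K → ℝ) (hμ : IsProb μ) (hμ' : IsProb μ') :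
    l1 (nuMF μ) (nuMF μ') ≤ (1 + LQ) * l1 μ μ' :=
  stmt0_general K LQ pi hpiProb hpiLip nuMF hnuMF μ μ' hμ hμ'
end

section
/- Let X and U be finite nonempty sets, K a positive integer, and M_R, L_R, L_Q ≥ 0. Let π = (π_k)_{k∈[K]} be decision rules π_k : X × P(X×[K]) → P(U) with |π_k(x,μ₁) − π_k(x,μ₂)|₁ ≤ L_Q·|μ₁ − μ₂|₁ for all x, k, μ₁, μ₂. Let r_k : X × U × P(X×[K]) × P(U×[K]) → ℝ (k ∈ [K]) satisfy |r_k(x,u,μ,ν)| ≤ M_R and |r_k(x,u,μ₁,ν₁) − r_k(x,u,μ₂,ν₂)| ≤ L_R·(|μ₁ − μ₂|₁ + |ν₁ − ν₂|₁) for all arguments. Define ν^MF(μ,π)(u,k) = Σ_{x∈X} π_k(x,μ)(u)·μ(x,k) and r_k^MF(μ,π) = Σ_{x∈X} Σ_{u∈U} μ(x,k)·π_k(x,μ)(u)·r_k(x,u,μ,ν^MF(μ,π)). Then for all μ, μ' ∈ P(X×[K]), Σ_{k∈[K]} |r_k^MF(μ,π) − r_k^MF(μ',π)| ≤ S_R·|μ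 − μ'|₁, where S_R = M_R·(1+L_Q) + L_R·(2+L_Q). -/
/-!
Both sides are sums over `(x, k)` and `u` of products `μ(x,k) · π_k(x,μ)(u) · r_k(…)`.
Telescoping the difference of two such triple products into three terms, the change of weight
costs `M_R |μ - μ'|₁`, the change of decision rule costs `M_R L_Q |μ - μ'|₁`, and the change of
reward costs `L_R (|μ - μ'|₁ + |ν - ν'|₁)`. The same telescoping with reward `1` bounds the
mean-field action distribution: `|ν^MF(μ) - ν^MF(μ')|₁ ≤ (1 + L_Q) |μ - μ'|₁`.
-/

open Finset

lemma IsProb.sum_mul_left {A : Type*} [Fintype A] {p : A → ℝ} (hp : IsProb p) (c : ℝ) :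
    ∑ a, c * p a = c := by
  rw [← mul_sum, hp.2, mul_one]

lemma abs_mul_mul_sub_le {m m' p p' f f' M : ℝ} (hm' : 0 ≤ m') (hp : 0 ≤ p) (hp' : 0 ≤ p')
    (hf : |f| ≤ M) :
    |m * p * f - m' * p' * f'| ≤
      |m - m'| * p * M + m' * |p - p'| * M + m' * p' * |f - f'| := by
  have hsplit : m * p * f - m' * p' * f'
      = (m - m') * p * f + m' * (p - p') * f + m' * (p' * (f - f')) := by ring
  rw [hsplit]
  refine (abs_add_three _ _ _).trans ?_
  simp only [abs_mul, abs_of_nonneg hp, abs_of_nonneg hp', abs_of_nonneg hm', ← mul_assoc]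
  gcongr

theorem sum_abs_mul_mul_sub_le {A B : Type*} [Fintype A] [Fintype B] {m m' : A → ℝ}
    {p p' f f' : A → B → ℝ} {M δ ε : ℝ}
    (hM : 0 ≤ M) (hm' : IsProb m') (hp : ∀ a, IsProb (p a)) (hp' : ∀ a, IsProb (p' a))
    (hf : ∀ a b, |f a b| ≤ M) (hpp' : ∀ a, l1 (p a) (p' a) ≤ δ)
    (hff' : ∀ a b, |f a b - f' a b| ≤ ε) :
    ∑ a, ∑ b, |m a * p a b * f a b - m' a * p' a b * f' a b| ≤ M * l1 m m' + M * δ + ε := by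
  calc ∑ a, ∑ b, |m a * p a b * f a b - m' a * p' a b * f' a b|
      ≤ ∑ a, ∑ b, (|m a - m' a| * p a b * M + m' a * |p a b - p' a b| * M
          + m' a * p' a b * ε) := by
        gcongr with a _ b _
        refine (abs_mul_mul_sub_le (hm'.1 a) ((hp a).1 b) ((hp' a).1 b) (hf a b)).trans ?_
        gcongr
        · exact mul_nonneg (hm'.1 a) ((hp' a).1 b)
        · exact hff' a b
    _ = ∑ a, (|m a - m' a| * M + m' a * M * l1 (p a) (p' a) + m' a * ε) := by
        refine sum_congr rfl fun a _ => ?_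
        simp only [sum_add_distrib, ← sum_mul, ← mul_sum, (hp a).2, (hp' a).2, l1]
        ring
    _ ≤ ∑ a, (|m a - m' a| * M + m' a * M * δ + m' a * ε) := by
        gcongr with a _
        · exact mul_nonneg (hm'.1 a) hM
        · exact hpp' a
    _ = M * l1 m m' + M * δ + ε := by
        simp only [sum_add_distrib, ← sum_mul, hm'.2, l1]
        ring

section Marginal

variable {X U K : Type*} [Fintype X] [Fintype U] [Fintype K]

/-- The law of `(u, k)` when `(x, k)` has law `μ` and `u` is drawn from `p (x, k)`. -/
def marginal (μ : X × K → ℝ) (p : X × K → U → ℝ) (q : U × K) : ℝ :=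
  ∑ x, p (x, q.2) q.1 * μ (x, q.2)

lemma sum_sum_prod_swap (g : X × K → U → ℝ) :
    ∑ q : U × K, ∑ x, g (x, q.2) q.1 = ∑ a : X × K, ∑ u, g a u := by
  rw [Fintype.sum_prod_type, Fintype.sum_prod_type_right, sum_comm]
  exact sum_congr rfl fun _ _ => sum_comm

lemma sum_abs_sum_sum_sub_le (g g' : X × K → U → ℝ) :
    ∑ k, |∑ x, ∑ u, g (x, k) u - ∑ x, ∑ u, g' (x, k) u| ≤ ∑ a : X × K, ∑ u, |g a u - g' a u| := by
  rw [Fintype.sum_prod_type_right]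
  gcongr with k _
  rw [← sum_sub_distrib]
  refine (abs_sum_le_sum_abs _ _).trans (sum_le_sum fun x _ => ?_)
  rw [← sum_sub_distrib]
  exact abs_sum_le_sum_abs _ _

lemma isProb_marginal {μ : X × K → ℝ} {p : X × K → U → ℝ} (hμ : IsProb μ)
    (hp : ∀ a, IsProb (p a)) : IsProb (marginal μ p) := by
  refine ⟨fun q => sum_nonneg fun x _ => mul_nonneg ((hp _).1 _) (hμ.1 _), ?_⟩
  simp only [marginal, sum_sum_prod_swap fun a u => p a u * μ a]
  simp only [mul_comm _ (μ _), (hp _).sum_mul_left, hμ.2]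

lemma l1_marginal_le {μ μ' : X × K → ℝ} {p p' : X × K → U → ℝ} {δ : ℝ} (hμ' : IsProb μ')
    (hp : ∀ a, IsProb (p a)) (hp' : ∀ a, IsProb (p' a)) (hpp' : ∀ a, l1 (p a) (p' a) ≤ δ) :
    l1 (marginal μ p) (marginal μ' p') ≤ l1 μ μ' + δ := by
  calc l1 (marginal μ p) (marginal μ' p')
      ≤ ∑ q : U × K, ∑ x, |p (x, q.2) q.1 * μ (x, q.2) - p' (x, q.2) q.1 * μ' (x, q.2)| := by
        unfold l1 marginal
        gcongr with q _
        rw [← sum_sub_distrib]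
        exact abs_sum_le_sum_abs _ _
    _ = ∑ a, ∑ u, |μ a * p a u * 1 - μ' a * p' a u * 1| := by
        rw [sum_sum_prod_swap fun a u => |p a u * μ a - p' a u * μ' a|]
        simp only [mul_one, mul_comm (μ _), mul_comm (μ' _)]
    _ ≤ 1 * l1 μ μ' + 1 * δ + 0 :=
        sum_abs_mul_mul_sub_le zero_le_one hμ' hp hp' (fun _ _ => by simp) hpp'
          (fun _ _ => by simp)
    _ = l1 μ μ' + δ := by ring

end Marginal

theorem stmt1_general
    {X U : Type*} [Fintype X] [Fintype U]
    (K : ℕ)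
    (MR LR LQ : ℝ) (hMR : 0 ≤ MR) (hLR : 0 ≤ LR)
    (pi : Fin K → X → (X × Fin K → ℝ) → U → ℝ)
    (hpiProb : ∀ k x μ, IsProb μ → IsProb (pi k x μ))
    (hpiLip : ∀ k x μ₁ μ₂, IsProb μ₁ → IsProb μ₂ →
      l1 (pi k x μ₁) (pi k x μ₂) ≤ LQ * l1 μ₁ μ₂)
    (r : Fin K → X → U → (X × Fin K → ℝ) → (U × Fin K → ℝ) → ℝ)
    (hrBdd : ∀ k x u μ ν, IsProb μ → IsProb ν → |r k x u μ ν| ≤ MR)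
    (hrLip : ∀ k x u μ₁ ν₁ μ₂ ν₂, IsProb μ₁ → IsProb ν₁ → IsProb μ₂ → IsProb ν₂ →
      |r k x u μ₁ ν₁ - r k x u μ₂ ν₂| ≤ LR * (l1 μ₁ μ₂ + l1 ν₁ ν₂))
    (nuMF : (X × Fin K → ℝ) → U × Fin K → ℝ)
    (hnuMF : nuMF = fun μ q => ∑ x, pi q.2 x μ q.1 * μ (x, q.2))
    (rMF : (X × Fin K → ℝ) → Fin K → ℝ)
    (hrMF : rMF = fun μ k => ∑ x, ∑ u, μ (x, k) * pi k x μ u * r k x u μ (nuMF μ))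
    (μ μ' : X × Fin K → ℝ) (hμ : IsProb μ) (hμ' : IsProb μ') :
    ∑ k, |rMF μ k - rMF μ' k| ≤ (MR * (1 + LQ) + LR * (2 + LQ)) * l1 μ μ' := by
  set L := l1 μ μ'
  set P : (X × Fin K → ℝ) → X × Fin K → U → ℝ := fun σ a => pi a.2 a.1 σ
  have hP : ∀ σ, IsProb σ → ∀ a, IsProb (P σ a) := fun σ hσ a => hpiProb _ _ _ hσ
  have hPP' : ∀ a, l1 (P μ a) (P μ' a) ≤ LQ * L := fun a => hpiLip _ _ _ _ hμ hμ'
  have hν : ∀ σ, nuMF σ = marginal σ (P σ) := fun σ => by subst hnuMF; rfl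
  have hνProb : ∀ σ, IsProb σ → IsProb (nuMF σ) := fun σ hσ =>
    (hν σ).symm ▸ isProb_marginal hσ (hP σ hσ)
  have hνν' : l1 (nuMF μ) (nuMF μ') ≤ L + LQ * L := by
    rw [hν, hν]
    exact l1_marginal_le hμ' (hP μ hμ) (hP μ' hμ') hPP'
  have hrr' : ∀ (a : X × Fin K) u,
      |r a.2 a.1 u μ (nuMF μ) - r a.2 a.1 u μ' (nuMF μ')| ≤ LR * (2 + LQ) * L :=
    fun a u => calc
      _ ≤ LR * (L + l1 (nuMF μ) (nuMF μ')) :=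
          hrLip _ _ _ _ _ _ _ hμ (hνProb μ hμ) hμ' (hνProb μ' hμ')
      _ ≤ LR * (L + (L + LQ * L)) := by gcongr
      _ = LR * (2 + LQ) * L := by ring
  subst hrMF
  calc ∑ k, |_ - _|
      ≤ ∑ a, ∑ u, |μ a * P μ a u * r a.2 a.1 u μ (nuMF μ)
          - μ' a * P μ' a u * r a.2 a.1 u μ' (nuMF μ')| := sum_abs_sum_sum_sub_le _ _
    _ ≤ MR * L + MR * (LQ * L) + LR * (2 + LQ) * L :=
        sum_abs_mul_mul_sub_le hMR hμ' (hP μ hμ) (hP μ' hμ')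
          (fun a u => hrBdd _ _ _ _ _ hμ (hνProb μ hμ)) hPP' hrr'
    _ = (MR * (1 + LQ) + LR * (2 + LQ)) * l1 μ μ' := by ring

theorem stmt1
    {X U : Type*} [Fintype X] [Fintype U] [Nonempty X] [Nonempty U]
    (K : ℕ) (hK : 0 < K)
    (MR LR LQ : ℝ) (hMR : 0 ≤ MR) (hLR : 0 ≤ LR) (hLQ : 0 ≤ LQ)
    (pi : Fin K → X → (X × Fin K → ℝ) → U → ℝ)
    (hpiProb : ∀ k x μ, IsProb μ → IsProb (pi k x μ))
    (hpiLip : ∀ k x μ₁ μ₂, IsProb μ₁ → IsProb μ₂ →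
      l1 (pi k x μ₁) (pi k x μ₂) ≤ LQ * l1 μ₁ μ₂)
    (r : Fin K → X → U → (X × Fin K → ℝ) → (U × Fin K → ℝ) → ℝ)
    (hrBdd : ∀ k x u μ ν, IsProb μ → IsProb ν → |r k x u μ ν| ≤ MR)
    (hrLip : ∀ k x u μ₁ ν₁ μ₂ ν₂, IsProb μ₁ → IsProb ν₁ → IsProb μ₂ → IsProb ν₂ →
      |r k x u μ₁ ν₁ - r k x u μ₂ ν₂| ≤ LR * (l1 μ₁ μ₂ + l1 ν₁ ν₂))
    (nuMF : (X × Fin K → ℝ) → U × Fin K → ℝ)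
    (hnuMF : nuMF = fun μ q => ∑ x, pi q.2 x μ q.1 * μ (x, q.2))
    (rMF : (X × Fin K → ℝ) → Fin K → ℝ)
    (hrMF : rMF = fun μ k => ∑ x, ∑ u, μ (x, k) * pi k x μ u * r k x u μ (nuMF μ))
    (μ μ' : X × Fin K → ℝ) (hμ : IsProb μ) (hμ' : IsProb μ') :
    ∑ k, |rMF μ k - rMF μ' k| ≤ (MR * (1 + LQ) + LR * (2 + LQ)) * l1 μ μ' :=
  stmt1_general K MR LR LQ hMR hLR pi hpiProb hpiLip r hrBdd hrLip nuMF hnuMF rMF hrMF μ μ' hμ hμ'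
end

section
/- Let X and U be finite nonempty sets, K a positive integer, and L_P, L_Q ≥ 0. Let π = (π_k)_{k∈[K]} be decision rules π_k : X × P(X×[K]) → P(U) with |π_k(x,μ₁) − π_k(x,μ₂)|₁ ≤ L_Q·|μ₁ − μ₂|₁ for all x, k, μ₁, μ₂. Let P_k : X × U × P(X×[K]) × P(U×[K]) → P(X) (k ∈ [K]) satisfy |P_k(x,u,μ₁,ν₁) − P_k(x,u,μ₂,ν₂)|₁ ≤ L_P·(|μ₁ − μ₂|₁ + |ν₁ − ν₂|₁) for all arguments. Define ν^MF(μ,π)(u,k) = Σ_{x∈X} π_k(x,μ)(u)·μ(x,k) and P^MF(μ,π) ∈ P(X×[K]) by P^MF(μ,π)(x',k) = Σ_{x∈X} Σ_{u∈U} μ(x,k)·π_k(x,μ)(u)·P_k(x,u,μ,ν^MF(μ,π))(x'). Then for all μ, μ' ∈ P(X×[K]), |P^MF(μ,π) − P^MF(μ',π)|₁ ≤ S_P·|μ − μ'|₁, where S_P = (1+L_Q) + L_P·(2+L_Q). -/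
open Finset

/-!
Both `ν^MF(μ)` and `P^MF(μ)` are, block by block in `k`, mixtures `∑ₐ w(a) f(a)` of probability
vectors, and for mixtures `|∑ w f - ∑ w' f'|₁ ≤ |w - w'|₁ + ∑ₐ w'(a) |f(a) - f'(a)|₁`.
Applied to `ν^MF` (weights `μ`, components `π_k(x, μ)`) this gives `|ν - ν'|₁ ≤ (1 + L_Q) |μ - μ'|₁`.
Inside `P^MF`, the component attached to `(x, k)` is itself the mixture of the `P_k(x, u, μ, ν)`
with weights `π_k(x, μ)`, which moves by at most `L_Q d + L_P (d + (1 + L_Q) d)`, `d = |μ - μ'|₁`;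
the outer mixture with weights `μ` adds `d`.
-/

section Mixture

variable {A B κ : Type*} [Fintype A] [Fintype B] [Fintype κ]

lemma l1_prod_eq_sum_s2 (F G : B × κ → ℝ) :
    l1 F G = ∑ k, l1 (fun b => F (b, k)) (fun b => G (b, k)) := by
  simp only [l1, Fintype.sum_prod_type_right]

lemma IsProb.mixture {w : A → ℝ} {f : A → B → ℝ} (hw : IsProb w) (hf : ∀ a, IsProb (f a)) :
    IsProb (fun b => ∑ a, w a * f a b) := by
  refine ⟨fun b => sum_nonneg fun a _ => mul_nonneg (hw.1 a) ((hf a).1 b), ?_⟩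
  rw [sum_comm]
  simp only [← mul_sum, (hf _).2, mul_one, hw.2]

lemma IsProb.blockMixture {w : A × κ → ℝ} {f : κ → A → B → ℝ} (hw : IsProb w)
    (hf : ∀ k a, IsProb (f k a)) :
    IsProb (fun p : B × κ => ∑ a, w (a, p.2) * f p.2 a p.1) := by
  refine ⟨fun p => sum_nonneg fun a _ => mul_nonneg (hw.1 _) ((hf _ a).1 _), ?_⟩
  rw [Fintype.sum_prod_type_right]
  calc ∑ k, ∑ b, ∑ a, w (a, k) * f k a b = ∑ k, ∑ a, w (a, k) := by
        refine sum_congr rfl fun k _ => ?_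
        rw [sum_comm]
        simp only [← mul_sum, (hf _ _).2, mul_one]
    _ = 1 := by rw [← Fintype.sum_prod_type_right, hw.2]

lemma abs_mul_sub_mul_le {a a' b b' : ℝ} (hb : 0 ≤ b) (ha' : 0 ≤ a') :
    |a * b - a' * b'| ≤ |a - a'| * b + a' * |b - b'| := by
  calc |a * b - a' * b'| = |(a - a') * b + a' * (b - b')| := by ring_nf
    _ ≤ |(a - a') * b| + |a' * (b - b')| := abs_add_le _ _
    _ = |a - a'| * b + a' * |b - b'| := by rw [abs_mul, abs_mul, abs_of_nonneg hb, abs_of_nonneg ha']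

lemma l1_mixture_le_s2 {w w' : A → ℝ} {f f' : A → B → ℝ} (hf : ∀ a, IsProb (f a))
    (hw' : ∀ a, 0 ≤ w' a) :
    l1 (fun b => ∑ a, w a * f a b) (fun b => ∑ a, w' a * f' a b) ≤
      l1 w w' + ∑ a, w' a * l1 (f a) (f' a) := by
  calc l1 (fun b => ∑ a, w a * f a b) (fun b => ∑ a, w' a * f' a b)
      = ∑ b, |∑ a, (w a * f a b - w' a * f' a b)| := by simp only [l1, sum_sub_distrib]
    _ ≤ ∑ b, ∑ a, (|w a - w' a| * f a b + w' a * |f a b - f' a b|) :=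
        sum_le_sum fun b _ => (abs_sum_le_sum_abs _ _).trans <|
          sum_le_sum fun a _ => abs_mul_sub_mul_le ((hf a).1 b) (hw' a)
    _ = l1 w w' + ∑ a, w' a * l1 (f a) (f' a) := by
        rw [sum_comm]
        simp only [sum_add_distrib, ← mul_sum, (hf _).2, mul_one, l1]

lemma l1_mixture_le_add {w w' : A → ℝ} {f f' : A → B → ℝ} {C : ℝ} (hf : ∀ a, IsProb (f a))
    (hw' : IsProb w') (hC : ∀ a, l1 (f a) (f' a) ≤ C) :
    l1 (fun b => ∑ a, w a * f a b) (fun b => ∑ a, w' a * f' a b) ≤ l1 w w' + C := by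
  refine (l1_mixture_le_s2 hf hw'.1).trans (add_le_add_right ?_ _)
  calc ∑ a, w' a * l1 (f a) (f' a) ≤ ∑ a, w' a * C :=
        sum_le_sum fun a _ => mul_le_mul_of_nonneg_left (hC a) (hw'.1 a)
    _ = C := by rw [← sum_mul, hw'.2, one_mul]

lemma l1_blockMixture_le {w w' : A × κ → ℝ} {f f' : κ → A → B → ℝ} {C : ℝ}
    (hf : ∀ k a, IsProb (f k a)) (hw' : IsProb w') (hC : ∀ k a, l1 (f k a) (f' k a) ≤ C) :
    l1 (fun p : B × κ => ∑ a, w (a, p.2) * f p.2 a p.1)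
      (fun p : B × κ => ∑ a, w' (a, p.2) * f' p.2 a p.1) ≤ l1 w w' + C := by
  rw [l1_prod_eq_sum_s2, l1_prod_eq_sum_s2 w]
  calc ∑ k, l1 (fun b => ∑ a, w (a, k) * f k a b) (fun b => ∑ a, w' (a, k) * f' k a b)
      ≤ ∑ k, (l1 (fun a => w (a, k)) (fun a => w' (a, k)) + ∑ a, w' (a, k) * C) :=
        sum_le_sum fun k _ => (l1_mixture_le_s2 (hf k) fun a => hw'.1 _).trans <|
          add_le_add_right (sum_le_sum fun a _ => mul_le_mul_of_nonneg_left (hC k a) (hw'.1 _)) _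
    _ = ∑ k, l1 (fun a => w (a, k)) (fun a => w' (a, k)) + C := by
        rw [sum_add_distrib, ← Fintype.sum_prod_type_right (fun p => w' p * C), ← sum_mul, hw'.2,
          one_mul]

end Mixture

theorem stmt2_general
    {X U : Type*} [Fintype X] [Fintype U]
    (K : ℕ)
    (LP LQ : ℝ) (hLP : 0 ≤ LP)
    (pi : Fin K → X → (X × Fin K → ℝ) → U → ℝ)
    (hpiProb : ∀ k x μ, IsProb μ → IsProb (pi k x μ))
    (hpiLip : ∀ k x μ₁ μ₂, IsProb μ₁ → IsProb μ₂ →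
      l1 (pi k x μ₁) (pi k x μ₂) ≤ LQ * l1 μ₁ μ₂)
    (Pk : Fin K → X → U → (X × Fin K → ℝ) → (U × Fin K → ℝ) → X → ℝ)
    (hPkProb : ∀ k x u μ ν, IsProb μ → IsProb ν → IsProb (Pk k x u μ ν))
    (hPkLip : ∀ k x u μ₁ ν₁ μ₂ ν₂, IsProb μ₁ → IsProb ν₁ → IsProb μ₂ → IsProb ν₂ →
      l1 (Pk k x u μ₁ ν₁) (Pk k x u μ₂ ν₂) ≤ LP * (l1 μ₁ μ₂ + l1 ν₁ ν₂))
    (nuMF : (X × Fin K → ℝ) → U × Fin K → ℝ)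
    (hnuMF : nuMF = fun μ q => ∑ x, pi q.2 x μ q.1 * μ (x, q.2))
    (PMFmu : (X × Fin K → ℝ) → X × Fin K → ℝ)
    (hPMFmu : PMFmu = fun μ p =>
      ∑ x, ∑ u, μ (x, p.2) * pi p.2 x μ u * Pk p.2 x u μ (nuMF μ) p.1)
    (μ μ' : X × Fin K → ℝ) (hμ : IsProb μ) (hμ' : IsProb μ') :
    l1 (PMFmu μ) (PMFmu μ') ≤ ((1 + LQ) + LP * (2 + LQ)) * l1 μ μ' := by
  set d := l1 μ μ'
  have hν_eq (m) : nuMF m = fun p => ∑ x, m (x, p.2) * pi p.2 x m p.1 := by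
    simp only [hnuMF, mul_comm]
  have hνProb (m) (hm : IsProb m) : IsProb (nuMF m) := by
    rw [hν_eq]
    exact hm.blockMixture fun k x => hpiProb k x m hm
  have hνLip : l1 (nuMF μ) (nuMF μ') ≤ d + LQ * d := by
    rw [hν_eq, hν_eq]
    exact l1_blockMixture_le (f := fun k x => pi k x μ) (f' := fun k x => pi k x μ')
      (fun k x => hpiProb k x μ hμ) hμ' fun k x => hpiLip k x μ μ' hμ hμ'
  let g (m : X × Fin K → ℝ) (k : Fin K) (x : X) (x' : X) : ℝ :=
    ∑ u, pi k x m u * Pk k x u m (nuMF m) x'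
  have hPM_eq (m) : PMFmu m = fun p => ∑ x, m (x, p.2) * g m p.2 x p.1 := by
    simp only [hPMFmu, g, mul_sum, mul_assoc]
  have hgProb (k x) : IsProb (g μ k x) :=
    (hpiProb k x μ hμ).mixture fun u => hPkProb k x u μ _ hμ (hνProb μ hμ)
  have hgLip (k x) : l1 (g μ k x) (g μ' k x) ≤ LQ * d + LP * (2 + LQ) * d := by
    refine (l1_mixture_le_add (fun u => hPkProb k x u μ _ hμ (hνProb μ hμ))
      (hpiProb k x μ' hμ') fun u => ?_).trans (add_le_add_left (hpiLip k x μ μ' hμ hμ') _)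
    calc l1 (Pk k x u μ (nuMF μ)) (Pk k x u μ' (nuMF μ'))
        ≤ LP * (d + l1 (nuMF μ) (nuMF μ')) :=
          hPkLip k x u _ _ _ _ hμ (hνProb μ hμ) hμ' (hνProb μ' hμ')
      _ ≤ LP * (d + (d + LQ * d)) := by gcongr
      _ = LP * (2 + LQ) * d := by ring
  calc l1 (PMFmu μ) (PMFmu μ') ≤ d + (LQ * d + LP * (2 + LQ) * d) := by
        rw [hPM_eq, hPM_eq]
        exact l1_blockMixture_le hgProb hμ' hgLip
    _ = ((1 + LQ) + LP * (2 + LQ)) * d := by ring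

theorem stmt2
    {X U : Type*} [Fintype X] [Fintype U] [Nonempty X] [Nonempty U]
    (K : ℕ) (hK : 0 < K)
    (LP LQ : ℝ) (hLP : 0 ≤ LP) (hLQ : 0 ≤ LQ)
    (pi : Fin K → X → (X × Fin K → ℝ) → U → ℝ)
    (hpiProb : ∀ k x μ, IsProb μ → IsProb (pi k x μ))
    (hpiLip : ∀ k x μ₁ μ₂, IsProb μ₁ → IsProb μ₂ →
      l1 (pi k x μ₁) (pi k x μ₂) ≤ LQ * l1 μ₁ μ₂)
    (Pk : Fin K → X → U → (X × Fin K → ℝ) → (U × Fin K → ℝ) → X → ℝ)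
    (hPkProb : ∀ k x u μ ν, IsProb μ → IsProb ν → IsProb (Pk k x u μ ν))
    (hPkLip : ∀ k x u μ₁ ν₁ μ₂ ν₂, IsProb μ₁ → IsProb ν₁ → IsProb μ₂ → IsProb ν₂ →
      l1 (Pk k x u μ₁ ν₁) (Pk k x u μ₂ ν₂) ≤ LP * (l1 μ₁ μ₂ + l1 ν₁ ν₂))
    (nuMF : (X × Fin K → ℝ) → U × Fin K → ℝ)
    (hnuMF : nuMF = fun μ q => ∑ x, pi q.2 x μ q.1 * μ (x, q.2))
    (PMFmu : (X × Fin K → ℝ) → X × Fin K → ℝ)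
    (hPMFmu : PMFmu = fun μ p =>
      ∑ x, ∑ u, μ (x, p.2) * pi p.2 x μ u * Pk p.2 x u μ (nuMF μ) p.1)
    (μ μ' : X × Fin K → ℝ) (hμ : IsProb μ) (hμ' : IsProb μ') :
    l1 (PMFmu μ) (PMFmu μ') ≤ ((1 + LQ) + LP * (2 + LQ)) * l1 μ μ' :=
  stmt2_general K LP LQ hLP pi hpiProb hpiLip Pk hPkProb hPkLip nuMF hnuMF PMFmu hPMFmu μ μ' hμ hμ'
end

section
/- Let M, N, S be positive integers and C ≥ 0. For each m ∈ [M] and n ∈ [N], let X_{m,n} be a Bernoulli (i.e., {0,1}-valued) random variable on a common probability space such that for each m ∈ [M] the family (X_{m,n})_{n∈[N]} is mutually independent, and such that for each n ∈ [N], Σ_{m∈[M]} E[X_{m,n}] = 1. Let C_{m,n} ∈ ℝ^S be constant vectors with |C_{m,n}|₁ ≤ C for all m, n. Then Σ_{s=1}^{S} Σ_{m=1}^{M} E| Σ_{n=1}^{N} C_{m,n}(s)·(X_{m,n} − E[X_{m,n}]) | ≤ C·√(M·N·S). -/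
open MeasureTheory ProbabilityTheory Finset

/-!
For fixed `m` and `s`, the variable `∑ n, C_{m,n}(s) (X_{m,n} - E X_{m,n})` is a centred sum of
independent Bernoulli variables, so its first absolute moment is at most the square root of its
variance `∑ n, C_{m,n}(s)² Var X_{m,n} ≤ ∑ n, C_{m,n}(s)² E X_{m,n}`. Summing over the `M S` pairs
`(m, s)`, Cauchy–Schwarz bounds the total by `√(M S)` times the square root of
`∑ s, ∑ m, ∑ n, C_{m,n}(s)² E X_{m,n} ≤ C² ∑ n, ∑ m, E X_{m,n} = C² N`.
-/

lemma Real.sum_sqrt_le_sqrt_card_mul_sum {ι : Type*} (s : Finset ι) {a : ι → ℝ}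
    (ha : ∀ i, 0 ≤ a i) : ∑ i ∈ s, √(a i) ≤ √(#s * ∑ i ∈ s, a i) := by
  simpa [Real.sqrt_mul (Nat.cast_nonneg _)] using
    Real.sum_sqrt_mul_sqrt_le s (fun _ => zero_le_one) ha

lemma sum_sq_le_sq_of_sum_abs_le {ι : Type*} (s : Finset ι) {v : ι → ℝ} {C : ℝ}
    (hv : ∑ i ∈ s, |v i| ≤ C) : ∑ i ∈ s, v i ^ 2 ≤ C ^ 2 :=
  calc ∑ i ∈ s, v i ^ 2 = ∑ i ∈ s, |v i| ^ 2 := by simp_rw [sq_abs]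
    _ ≤ (∑ i ∈ s, |v i|) ^ 2 := sum_sq_le_sq_sum_of_nonneg fun i _ => abs_nonneg _
    _ ≤ C ^ 2 := pow_le_pow_left₀ (sum_nonneg fun i _ => abs_nonneg _) hv 2

lemma sum_sum_sum_sq_mul_le_of_sum_abs_le {σ μ ν : Type*} [Fintype σ] [Fintype μ] [Fintype ν]
    {C : ℝ} (v : μ → ν → σ → ℝ) (w : μ → ν → ℝ) (hw0 : ∀ m n, 0 ≤ w m n)
    (hw : ∀ n, ∑ m, w m n = 1) (hv : ∀ m n, ∑ s, |v m n s| ≤ C) :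
    ∑ s, ∑ m, ∑ n, v m n s ^ 2 * w m n ≤ C ^ 2 * Fintype.card ν :=
  calc ∑ s, ∑ m, ∑ n, v m n s ^ 2 * w m n = ∑ n, ∑ m, (∑ s, v m n s ^ 2) * w m n := by
        simp_rw [sum_mul, sum_comm (s := (univ : Finset σ))]
        exact sum_comm
    _ ≤ ∑ n, ∑ m, C ^ 2 * w m n := by
        gcongr with n _ m _
        · exact hw0 m n
        · exact sum_sq_le_sq_of_sum_abs_le _ (hv m n)
    _ = C ^ 2 * Fintype.card ν := by simp_rw [← mul_sum, hw]; simp [mul_comm]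

section Probability

variable {Ω : Type*} [MeasurableSpace Ω] {P : Measure Ω}

lemma variance_sum_const_mul_of_iIndepFun {ι : Type*} [Fintype ι] {X : ι → Ω → ℝ}
    (hX : ∀ i, MemLp (X i) 2 P) (hind : iIndepFun X P) (c : ι → ℝ) :
    variance (fun ω => ∑ i, c i * X i ω) P = ∑ i, c i ^ 2 * variance (X i) P := by
  have hpair : Set.Pairwise ↑(univ : Finset ι) fun i j =>
      IndepFun (fun ω => c i * X i ω) (fun ω => c j * X j ω) P := fun i _ j _ hij =>
    (hind.indepFun hij).comp (measurable_const_mul (c i)) (measurable_const_mul (c j))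
  have hsum := IndepFun.variance_sum (fun i _ => (hX i).const_mul (c i)) hpair
  simp only [variance_const_mul] at hsum
  rw [← hsum]
  congr 1
  ext ω
  simp

variable [IsProbabilityMeasure P]

lemma integral_abs_le_sqrt_integral_sq {Z : Ω → ℝ} (hZ : MemLp Z 2 P) :
    ∫ ω, |Z ω| ∂P ≤ √(∫ ω, Z ω ^ 2 ∂P) := by
  refine Real.le_sqrt_of_sq_le ?_
  have hvar := variance_eq_sub hZ.abs ▸ variance_nonneg (fun ω => |Z ω|) P
  simpa [sq_abs] using hvar

lemma integral_abs_sub_integral_le_sqrt_variance {Z : Ω → ℝ} (hZ : MemLp Z 2 P) :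
    ∫ ω, |Z ω - ∫ ω', Z ω' ∂P| ∂P ≤ √(variance Z P) := by
  rw [variance_eq_integral hZ.aemeasurable]
  exact integral_abs_le_sqrt_integral_sq (hZ.sub (memLp_const _))

lemma variance_le_integral_of_eq_zero_or_one {X : Ω → ℝ} (hX : AEStronglyMeasurable X P)
    (h01 : ∀ ω, X ω = 0 ∨ X ω = 1) : variance X P ≤ ∫ ω, X ω ∂P := by
  have hsq : X ^ 2 = X := funext fun ω => by rcases h01 ω with h | h <;> simp [h]
  have hle := variance_le_expectation_sq hX
  rwa [hsq] at hle

lemma integral_abs_sum_mul_sub_integral_le_of_iIndepFun {ι : Type*} [Fintype ι]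
    {X : ι → Ω → ℝ} (hX : ∀ i, MemLp (X i) 2 P) (hind : iIndepFun X P) (c : ι → ℝ) :
    ∫ ω, |∑ i, c i * (X i ω - ∫ ω', X i ω' ∂P)| ∂P ≤ √(∑ i, c i ^ 2 * variance (X i) P) := by
  have hW : MemLp (fun ω => ∑ i, c i * X i ω) 2 P :=
    memLp_finsetSum _ fun i _ => (hX i).const_mul (c i)
  have hcentre : ∀ ω, ∑ i, c i * (X i ω - ∫ ω', X i ω' ∂P)
      = ∑ i, c i * X i ω - ∫ ω', ∑ i, c i * X i ω' ∂P := fun ω => by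
    rw [integral_finsetSum _ fun i _ => ((hX i).integrable one_le_two).const_mul (c i)]
    simp [integral_const_mul, mul_sub]
  simp_rw [hcentre, ← variance_sum_const_mul_of_iIndepFun hX hind c]
  exact integral_abs_sub_integral_le_sqrt_variance hW

lemma integral_abs_sum_mul_sub_integral_le_of_eq_zero_or_one {ι : Type*} [Fintype ι]
    {X : ι → Ω → ℝ} (hmeas : ∀ i, Measurable (X i)) (h01 : ∀ i ω, X i ω = 0 ∨ X i ω = 1)
    (hind : iIndepFun X P) (c : ι → ℝ) :
    ∫ ω, |∑ i, c i * (X i ω - ∫ ω', X i ω' ∂P)| ∂P ≤ √(∑ i, c i ^ 2 * ∫ ω, X i ω ∂P) := by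
  have hX2 : ∀ i, MemLp (X i) 2 P := fun i =>
    MemLp.of_bound (hmeas i).aestronglyMeasurable 1
      (.of_forall fun ω => by rcases h01 i ω with h | h <;> simp [h])
  refine (integral_abs_sum_mul_sub_integral_le_of_iIndepFun hX2 hind c).trans ?_
  refine Real.sqrt_le_sqrt (sum_le_sum fun i _ => ?_)
  gcongr
  exact variance_le_integral_of_eq_zero_or_one (hmeas i).aestronglyMeasurable (h01 i)

end Probability

theorem stmt3_general {Ω : Type*} [MeasurableSpace Ω] (P : Measure Ω) [IsProbabilityMeasure P]
    (M N S : ℕ)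
    (C : ℝ) (hC : 0 ≤ C)
    (X : Fin M → Fin N → Ω → ℝ)
    (hmeas : ∀ m n, Measurable (X m n))
    (hBer : ∀ m n ω, X m n ω = 0 ∨ X m n ω = 1)
    (hindep : ∀ m, iIndepFun (X m) P)
    (hsum : ∀ n, ∑ m, ∫ ω, X m n ω ∂P = 1)
    (Cv : Fin M → Fin N → Fin S → ℝ)
    (hCv : ∀ m n, ∑ s, |Cv m n s| ≤ C) :
    ∑ s, ∑ m, ∫ ω, |∑ n, Cv m n s * (X m n ω - ∫ ω', X m n ω' ∂P)| ∂P
      ≤ C * Real.sqrt ((M : ℝ) * N * S) := by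
  set p : Fin M → Fin N → ℝ := fun m n => ∫ ω, X m n ω ∂P
  set a : Fin S × Fin M → ℝ := fun x => ∑ n, Cv x.2 n x.1 ^ 2 * p x.2 n
  have hp0 : ∀ m n, 0 ≤ p m n := fun m n =>
    integral_nonneg fun ω => by rcases hBer m n ω with h | h <;> simp [h]
  have ha0 : ∀ x, 0 ≤ a x := fun x => sum_nonneg fun n _ => by have := hp0 x.2 n; positivity
  calc ∑ s, ∑ m, ∫ ω, |∑ n, Cv m n s * (X m n ω - p m n)| ∂P
      ≤ ∑ x : Fin S × Fin M, √(a x) := by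
        rw [Fintype.sum_prod_type]
        gcongr with s _ m _
        exact integral_abs_sum_mul_sub_integral_le_of_eq_zero_or_one (hmeas m) (hBer m)
          (hindep m) _
    _ ≤ √(S * M * ∑ s, ∑ m, ∑ n, Cv m n s ^ 2 * p m n) := by
        simpa [Fintype.sum_prod_type] using Real.sum_sqrt_le_sqrt_card_mul_sum univ fun x => ha0 x
    _ ≤ √(S * M * (C ^ 2 * N)) := by
        gcongr
        simpa using sum_sum_sum_sq_mul_le_of_sum_abs_le Cv p hp0 hsum hCv
    _ = C * √(M * N * S) := by
        rw [show (S : ℝ) * M * (C ^ 2 * N) = C ^ 2 * (M * N * S) by ring,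
          Real.sqrt_mul (sq_nonneg C), Real.sqrt_sq hC]

theorem stmt3 {Ω : Type*} [MeasurableSpace Ω] (P : Measure Ω) [IsProbabilityMeasure P]
    (M N S : ℕ) (hM : 0 < M) (hN : 0 < N) (hS : 0 < S)
    (C : ℝ) (hC : 0 ≤ C)
    (X : Fin M → Fin N → Ω → ℝ)
    (hmeas : ∀ m n, Measurable (X m n))
    (hBer : ∀ m n ω, X m n ω = 0 ∨ X m n ω = 1)
    (hindep : ∀ m, iIndepFun (X m) P)
    (hsum : ∀ n, ∑ m, ∫ ω, X m n ω ∂P = 1)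
    (Cv : Fin M → Fin N → Fin S → ℝ)
    (hCv : ∀ m n, ∑ s, |Cv m n s| ≤ C) :
    ∑ s, ∑ m, ∫ ω, |∑ n, Cv m n s * (X m n ω - ∫ ω', X m n ω' ∂P)| ∂P
      ≤ C * Real.sqrt ((M : ℝ) * N * S) :=
  stmt3_general P M N S C hC X hmeas hBer hindep hsum Cv hCv
end

section
/- Let U be a finite nonempty set, K a positive integer, and N_1,...,N_K positive integers with N_pop = Σ_{k∈[K]} N_k. For each k ∈ [K] and j ∈ [N_k], let u_{j,k} be a U-valued random variable on a common probability space, and assume the family (u_{j,k})_{j∈[N_k], k∈[K]} is mutually independent. Define the random empirical distribution ν^N(u,k) = (1/N_pop)·Σ_{j=1}^{N_k} 1{u_{j,k} = u} and its mean ν̂(u,k) = (1/N_pop)·Σ_{j=1}^{N_k} P(u_{j,k} = u). Then E[ Σ_{k∈[K]} Σ_{u∈U} |ν^N(u,k) − ν̂(u,k)| ] ≤ (1/N_pop)·(Σ_{k∈[K]} √N_k)·√|U|. -/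
/-! For fixed `k` and `u`, `N_pop · ν^N(u,k)` is a sum of `N_k` pairwise independent Bernoulli
variables with parameters `p_j(u) = P(u_{j,k} = u)`, so its variance is at most `∑_j p_j(u)`.
Hence `E|N_pop · (ν^N - ν̂)(u,k)| ≤ √(∑_j p_j(u))` by Cauchy–Schwarz in `L²(P)`, and Cauchy–Schwarz
over `u ∈ U`, together with `∑_u p_j(u) = 1`, bounds the sum over `u` by `√(N_k |U|)`. -/

open MeasureTheory ProbabilityTheory Finset

lemma sum_sqrt_le_sqrt_card_mul_sqrt_sum {ι : Type*} (s : Finset ι) {f : ι → ℝ}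
    (hf : ∀ i, 0 ≤ f i) : ∑ i ∈ s, √(f i) ≤ √(#s : ℝ) * √(∑ i ∈ s, f i) := by
  simpa using Real.sum_sqrt_mul_sqrt_le s (f := fun _ => 1) (fun _ => zero_le_one) hf

namespace ProbabilityTheory

variable {Ω : Type*} [MeasurableSpace Ω] {P : Measure Ω}

lemma integral_abs_sub_integral_le_sqrt_variance [IsProbabilityMeasure P] {Y : Ω → ℝ}
    (hY : MemLp Y 2 P) : ∫ ω, |Y ω - P[Y]| ∂P ≤ √(variance Y P) := by
  have hdev : MemLp (fun ω => |Y ω - P[Y]|) 2 P := (hY.sub (memLp_const _)).abs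
  have hvar := variance_nonneg (fun ω => |Y ω - P[Y]|) P
  rw [variance_eq_sub hdev] at hvar
  rw [variance_eq_integral hY.aemeasurable]
  refine Real.le_sqrt_of_sq_le ?_
  simpa [sq_abs] using hvar

variable {U : Type*} [MeasurableSpace U] [MeasurableSingletonClass U]

section Indicator

variable {Y : Ω → U}

lemma sum_toReal_measure_fiber_eq_one [IsProbabilityMeasure P] [Fintype U] (hY : Measurable Y) :
    ∑ u, (P {ω | Y ω = u}).toReal = 1 := by
  have h := sum_measureReal_preimage_singleton (μ := P) univ
    fun u _ => hY (measurableSet_singleton u)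
  simp only [coe_univ, Set.preimage_univ, probReal_univ] at h
  exact h

variable [DecidableEq U]

lemma measurable_ite_eq (hY : Measurable Y) (u : U) :
    Measurable fun ω => if Y ω = u then (1 : ℝ) else 0 :=
  Measurable.ite (hY (measurableSet_singleton u)) measurable_const measurable_const

lemma memLp_ite_eq [IsFiniteMeasure P] (hY : Measurable Y) (u : U) (p : ENNReal) :
    MemLp (fun ω => if Y ω = u then (1 : ℝ) else 0) p P := by
  refine MemLp.of_bound (measurable_ite_eq hY u).aestronglyMeasurable 1 (ae_of_all _ fun ω => ?_)
  split_ifs <;> simp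

lemma integral_ite_eq (hY : Measurable Y) (u : U) :
    ∫ ω, (if Y ω = u then (1 : ℝ) else 0) ∂P = (P {ω | Y ω = u}).toReal := by
  have hind : (fun ω => if Y ω = u then (1 : ℝ) else 0) = (Y ⁻¹' {u}).indicator 1 := by
    ext ω
    by_cases h : Y ω = u <;> simp [h]
  rw [hind, integral_indicator_one (hY (measurableSet_singleton u))]
  rfl

lemma variance_ite_eq_le [IsProbabilityMeasure P] (hY : Measurable Y) (u : U) :
    variance (fun ω => if Y ω = u then (1 : ℝ) else 0) P ≤ (P {ω | Y ω = u}).toReal := by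
  refine (variance_le_expectation_sq (measurable_ite_eq hY u).aestronglyMeasurable).trans_eq ?_
  rw [← integral_ite_eq hY u]
  congr 1 with ω
  by_cases h : Y ω = u <;> simp [h]

end Indicator

variable [DecidableEq U] {ι : Type*} [Fintype ι] {Y : ι → Ω → U}

def empiricalCount (Y : ι → Ω → U) (u : U) (ω : Ω) : ℝ :=
  ∑ i, if Y i ω = u then 1 else 0

lemma memLp_empiricalCount [IsFiniteMeasure P] (hY : ∀ i, Measurable (Y i)) (u : U)
    (p : ENNReal) : MemLp (empiricalCount Y u) p P :=
  memLp_finsetSum univ fun i _ => memLp_ite_eq (hY i) u p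

lemma integral_empiricalCount [IsFiniteMeasure P] (hY : ∀ i, Measurable (Y i)) (u : U) :
    P[empiricalCount Y u] = ∑ i, (P {ω | Y i ω = u}).toReal := by
  unfold empiricalCount
  rw [integral_finsetSum _ fun i _ => (memLp_ite_eq (hY i) u 1).integrable le_rfl]
  exact sum_congr rfl fun i _ => integral_ite_eq (hY i) u

lemma integrable_abs_empiricalCount_sub [IsFiniteMeasure P] (hY : ∀ i, Measurable (Y i)) (u : U)
    (c : ℝ) : Integrable (fun ω => |empiricalCount Y u ω - c|) P :=
  (((memLp_empiricalCount hY u 1).integrable le_rfl).sub (integrable_const c)).abs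

lemma variance_empiricalCount_le [IsProbabilityMeasure P] (hY : ∀ i, Measurable (Y i))
    (hindep : Pairwise fun i j => IndepFun (Y i) (Y j) P) (u : U) :
    variance (empiricalCount Y u) P ≤ ∑ i, (P {ω | Y i ω = u}).toReal := by
  have hg := measurable_ite_eq (measurable_id (α := U)) u
  have hsum : empiricalCount Y u = ∑ i, fun ω => if Y i ω = u then (1 : ℝ) else 0 := by
    ext ω
    simp [empiricalCount]
  rw [hsum, IndepFun.variance_sum (fun i _ => memLp_ite_eq (hY i) u 2)
    fun i _ j _ hij => (hindep hij).comp hg hg]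
  exact sum_le_sum fun i _ => variance_ite_eq_le (hY i) u

theorem integral_sum_abs_empiricalCount_sub_le [IsProbabilityMeasure P] [Fintype U]
    (hY : ∀ i, Measurable (Y i)) (hindep : Pairwise fun i j => IndepFun (Y i) (Y j) P) :
    ∫ ω, ∑ u, |empiricalCount Y u ω - ∑ i, (P {ω | Y i ω = u}).toReal| ∂P
      ≤ √(Fintype.card ι) * √(Fintype.card U) := by
  rw [integral_finsetSum _ fun u _ => integrable_abs_empiricalCount_sub hY u _]
  calc _ ≤ ∑ u, √(variance (empiricalCount Y u) P) := by
        gcongr with u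
        simpa [integral_empiricalCount hY u] using
          integral_abs_sub_integral_le_sqrt_variance (memLp_empiricalCount hY u 2 (P := P))
    _ ≤ √(Fintype.card U) * √(∑ u, variance (empiricalCount Y u) P) :=
        sum_sqrt_le_sqrt_card_mul_sqrt_sum univ fun u => variance_nonneg _ _
    _ ≤ √(Fintype.card U) * √(Fintype.card ι) := by
        gcongr
        calc ∑ u, variance (empiricalCount Y u) P ≤ ∑ u, ∑ i, (P {ω | Y i ω = u}).toReal :=
              sum_le_sum fun u _ => variance_empiricalCount_le hY hindep u
          _ = ∑ i, ∑ u, (P {ω | Y i ω = u}).toReal := sum_comm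
          _ = Fintype.card ι := by simp [sum_toReal_measure_fiber_eq_one (hY _)]
    _ = √(Fintype.card ι) * √(Fintype.card U) := mul_comm _ _

end ProbabilityTheory

theorem stmt6_general {Ω : Type*} [MeasurableSpace Ω] (P : Measure Ω) [IsProbabilityMeasure P]
    {U : Type*} [Fintype U] [DecidableEq U]
    [MeasurableSpace U] [MeasurableSingletonClass U]
    (K : ℕ) (N : Fin K → ℕ)
    (Npop : ℝ) (hNpop : Npop = ∑ k, (N k : ℝ))
    (u : (k : Fin K) → Fin (N k) → Ω → U)
    (hmeas : ∀ k j, Measurable (u k j))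
    (hindep : iIndepFun
      (fun p : Σ k : Fin K, Fin (N k) => u p.1 p.2) P)
    (νN : Ω → U × Fin K → ℝ)
    (hνN : ∀ ω u0 k, νN ω (u0, k) = (∑ j, if u k j ω = u0 then (1 : ℝ) else 0) / Npop)
    (νhat : U × Fin K → ℝ)
    (hνhat : ∀ u0 k, νhat (u0, k) = (∑ j, (P {ω | u k j ω = u0}).toReal) / Npop) :
    ∫ ω, ∑ k, ∑ u0 : U, |νN ω (u0, k) - νhat (u0, k)| ∂P
      ≤ (1 / Npop) * (∑ k, Real.sqrt (N k)) * Real.sqrt (Fintype.card U) := by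
  have hNpop_nonneg : 0 ≤ Npop := hNpop ▸ sum_nonneg fun k _ => Nat.cast_nonneg _
  have hterm : ∀ ω k u0, |νN ω (u0, k) - νhat (u0, k)|
      = |empiricalCount (u k) u0 ω - ∑ j, (P {ω | u k j ω = u0}).toReal| / Npop :=
    fun ω k u0 => by rw [hνN, hνhat, ← sub_div, abs_div, abs_of_nonneg hNpop_nonneg, empiricalCount]
  have hpair : ∀ k, Pairwise fun i j => IndepFun (u k i) (u k j) P :=
    fun k i j hij => hindep.indepFun (i := ⟨k, i⟩) (j := ⟨k, j⟩) (by simpa using hij)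
  simp_rw [hterm, ← sum_div, integral_div]
  rw [integral_finsetSum _ fun k _ => integrable_finsetSum _ fun u0 _ =>
    integrable_abs_empiricalCount_sub (hmeas k) u0 _]
  calc _ ≤ (∑ k, √(N k) * √(Fintype.card U)) / Npop := by
        gcongr with k
        simpa using integral_sum_abs_empiricalCount_sub_le (hmeas k) (hpair k)
    _ = _ := by rw [← sum_mul]; ring

theorem stmt6 {Ω : Type*} [MeasurableSpace Ω] (P : Measure Ω) [IsProbabilityMeasure P]
    {U : Type*} [Fintype U] [Nonempty U] [DecidableEq U]
    [MeasurableSpace U] [MeasurableSingletonClass U]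
    (K : ℕ) (hK : 0 < K) (N : Fin K → ℕ) (hN : ∀ k, 0 < N k)
    (Npop : ℝ) (hNpop : Npop = ∑ k, (N k : ℝ))
    (u : (k : Fin K) → Fin (N k) → Ω → U)
    (hmeas : ∀ k j, Measurable (u k j))
    (hindep : iIndepFun
      (fun p : Σ k : Fin K, Fin (N k) => u p.1 p.2) P)
    (νN : Ω → U × Fin K → ℝ)
    (hνN : ∀ ω u0 k, νN ω (u0, k) = (∑ j, if u k j ω = u0 then (1 : ℝ) else 0) / Npop)
    (νhat : U × Fin K → ℝ)
    (hνhat : ∀ u0 k, νhat (u0, k) = (∑ j, (P {ω | u k j ω = u0}).toReal) / Npop) :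
    ∫ ω, ∑ k, ∑ u0 : U, |νN ω (u0, k) - νhat (u0, k)| ∂P
      ≤ (1 / Npop) * (∑ k, Real.sqrt (N k)) * Real.sqrt (Fintype.card U) :=
  stmt6_general P K N Npop hNpop u hmeas hindep νN hνN νhat hνhat
end

section
/- Let X and U be finite nonempty sets, K a positive integer, N_1,...,N_K positive integers with N_pop = Σ_k N_k, and L_P ≥ 0. Fix states x_{j,k} ∈ X for j ∈ [N_k], k ∈ [K], with empirical distribution μ^N(x,k) = (1/N_pop)·Σ_j 1{x_{j,k} = x}. Let π = (π_k)_{k∈[K]} be decision rules π_k : X × P(X×[K]) → P(U), let (u_{j,k})_{j,k} be mutually independent U-valued random variables with u_{j,k} ~ π_k(x_{j,k}, μ^N), and let ν^N(u,k) = (1/N_pop)·Σ_j 1{u_{j,k} = u}. Let P_k : X × U × P(X×[K]) × P(U×[K]) → P(X) satisfy |P_k(x,u,μ,ν₁) − P_k(x,u,μ,ν₂)|₁ ≤ L_P·|ν₁ − ν₂|₁ for all arguments, and let (x'_{j,k})_{j,k} be X-valued random variables that, conditionally on (u_{j,k})_{j,k}, are mutually independent with conditional law of x'_{j,k} equal to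 P_k(x_{j,k}, u_{j,k}, μ^N, ν^N). Let μ'^N(x,k) = (1/N_pop)·Σ_j 1{x'_{j,k} = x} and define ν^MF(μ^N,π)(u,k) = Σ_x π_k(x,μ^N)(u)·μ^N(x,k) and P^MF(μ^N,π)(x',k) = Σ_{x,u} μ^N(x,k)·π_k(x,μ^N)(u)·P_k(x,u,μ^N,ν^MF(μ^N,π))(x'). Then E[ |μ'^N − P^MF(μ^N,π)|₁ ] ≤ (2 + L_P)·√(|X|·|U|)·(1/N_pop)·Σ_{k∈[K]} √N_k. -/
/-!
Split `‖μ'ᴺ - Pᴹᶠ‖₁` by the triangle inequality through the conditional mean of `μ'ᴺ` given the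
actions, `(1/N_pop) Σⱼ P_k(x_j, u_j, μᴺ, νᴺ)`, and the same average with `νᴺ` replaced by `νᴹᶠ`.
The first and last pieces are averages of independent vectors with values in the simplex, centred
at their means: by Jensen and additivity of variances,
`E |Σⱼ (h(Yⱼ) - E h(Yⱼ))| ≤ √(Σⱼ Var h(Yⱼ))`, each variance is at most the corresponding mean, and
Cauchy–Schwarz over the coordinates gives `√(|X| N_k)` for class `k`. The middle piece is at most
`L_P ‖νᴺ - νᴹᶠ‖₁`, whose expectation is bounded in the same way by `√(|U| N_k)` per class.
With finitely many states and actions, every expectation is a finite sum over configurations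
weighted by the product of the individual laws.
-/

open MeasureTheory ProbabilityTheory Finset

theorem l1_triangle {A : Type*} [Fintype A] (f g h : A → ℝ) : l1 f h ≤ l1 f g + l1 g h := by
  rw [l1, l1, l1, ← sum_add_distrib]
  exact sum_le_sum fun a _ => abs_sub_le _ _ _

theorem IsProb.le_one {A : Type*} [Fintype A] {w : A → ℝ} (hw : IsProb w) (a : A) : w a ≤ 1 :=
  hw.2 ▸ single_le_sum (fun b _ => hw.1 b) (mem_univ a)

theorem sum_mul_abs_le_sqrt {A : Type*} [Fintype A] {w : A → ℝ} (hw : IsProb w) (f : A → ℝ) :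
    ∑ a, w a * |f a| ≤ √(∑ a, w a * f a ^ 2) := by
  apply Real.le_sqrt_of_sq_le
  have := (convexOn_pow 2).map_sum_le (t := univ) (fun a _ => hw.1 a) hw.2
    (fun a _ => abs_nonneg (f a) : ∀ a ∈ univ, |f a| ∈ Set.Ici 0)
  simpa only [smul_eq_mul, sq_abs] using this

theorem sum_mul_sq_sub_le {A : Type*} [Fintype A] {w : A → ℝ} (hw : IsProb w) {h : A → ℝ}
    (h0 : ∀ a, 0 ≤ h a) (h1 : ∀ a, h a ≤ 1) :
    ∑ a, w a * (h a - ∑ b, w b * h b) ^ 2 ≤ ∑ a, w a * h a := by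
  set m := ∑ b, w b * h b with hm
  have hsq : ∑ a, w a * h a ^ 2 ≤ m := sum_le_sum fun a _ =>
    mul_le_mul_of_nonneg_left (pow_le_of_le_one (h0 a) (h1 a) two_ne_zero) (hw.1 a)
  have expand : ∀ a, w a * (h a - m) ^ 2 = w a * h a ^ 2 - 2 * m * (w a * h a) + m ^ 2 * w a :=
    fun a => by ring
  rw [sum_congr rfl fun a _ => expand a, sum_add_distrib, sum_sub_distrib, ← mul_sum, ← mul_sum,
    ← hm, hw.2]
  nlinarith

theorem sum_mul_l1_le_add {A B : Type*} [Fintype A] [Fintype B] {w : A → ℝ} (hw : IsProb w)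
    (f : A → B → ℝ) (g h : B → ℝ) :
    ∑ a, w a * l1 (f a) h ≤ ∑ a, w a * l1 (f a) g + l1 g h := by
  calc ∑ a, w a * l1 (f a) h ≤ ∑ a, w a * (l1 (f a) g + l1 g h) :=
        sum_le_sum fun a _ => mul_le_mul_of_nonneg_left (l1_triangle _ _ _) (hw.1 a)
    _ = _ := by simp only [mul_add, sum_add_distrib, ← sum_mul, hw.2, one_mul]

theorem sum_sqrt_le_sqrt_card_mul_sum {T : Type*} [Fintype T] {V : T → ℝ} (hV : ∀ t, 0 ≤ V t) :
    ∑ t, √(V t) ≤ √(Fintype.card T * ∑ t, V t) := by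
  have := Real.sum_sqrt_mul_sqrt_le univ (fun _ => zero_le_one) hV
  simpa [Real.sqrt_mul (Nat.cast_nonneg _)] using this

section ProductWeight

variable {ι S : Type*} [Fintype ι] [DecidableEq ι] [Fintype S] {p : ι → S → ℝ}

theorem sum_prod_mul_prod (p r : ι → S → ℝ) :
    ∑ a : ι → S, (∏ i, p i (a i)) * ∏ i, r i (a i) = ∏ i, ∑ s, p i s * r i s := by
  simp_rw [← prod_mul_distrib]
  exact (Fintype.prod_sum fun i s => p i s * r i s).symm

theorem isProb_prod (hp : ∀ i, IsProb (p i)) : IsProb fun a : ι → S => ∏ i, p i (a i) := by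
  refine ⟨fun a => prod_nonneg fun i _ => (hp i).1 _, ?_⟩
  have := sum_prod_mul_prod p fun _ _ => 1
  simp only [prod_const_one, mul_one] at this
  exact this.trans (prod_eq_one fun i _ => (hp i).2)

theorem sum_prod_mul_prod_finset (hp : ∀ i, ∑ s, p i s = 1) (f : ι → S → ℝ) (J : Finset ι) :
    ∑ a : ι → S, (∏ i, p i (a i)) * ∏ i ∈ J, f i (a i) = ∏ i ∈ J, ∑ s, p i s * f i s := by
  calc ∑ a : ι → S, (∏ i, p i (a i)) * ∏ i ∈ J, f i (a i)
        = ∑ a : ι → S, (∏ i, p i (a i)) * ∏ i, if i ∈ J then f i (a i) else 1 := by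
        simp only [prod_ite_mem, univ_inter]
    _ = ∏ i, ∑ s, p i s * if i ∈ J then f i s else 1 :=
        sum_prod_mul_prod p fun i s => if i ∈ J then f i s else 1
    _ = ∏ i, if i ∈ J then ∑ s, p i s * f i s else 1 :=
        prod_congr rfl fun i _ => by split_ifs <;> simp only [mul_one, hp]
    _ = ∏ i ∈ J, ∑ s, p i s * f i s := by simp only [prod_ite_mem, univ_inter]

theorem sum_prod_mul_sq_sum (hp : ∀ i, ∑ s, p i s = 1) {d : ι → S → ℝ}
    (hd : ∀ i, ∑ s, p i s * d i s = 0) (J : Finset ι) :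
    ∑ a : ι → S, (∏ i, p i (a i)) * (∑ i ∈ J, d i (a i)) ^ 2 = ∑ i ∈ J, ∑ s, p i s * d i s ^ 2 := by
  have cross : ∀ i j, ∑ a : ι → S, (∏ i, p i (a i)) * (d i (a i) * d j (a j))
      = if i = j then ∑ s, p i s * d i s ^ 2 else 0 := by
    intro i j
    split_ifs with hij
    · subst hij
      simpa only [prod_singleton, sq] using
        sum_prod_mul_prod_finset hp (fun i s => d i s * d i s) {i}
    · simpa [prod_pair hij, hd i] using sum_prod_mul_prod_finset hp d {i, j}
  calc ∑ a : ι → S, (∏ i, p i (a i)) * (∑ i ∈ J, d i (a i)) ^ 2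
      = ∑ i ∈ J, ∑ j ∈ J, ∑ a : ι → S, (∏ i, p i (a i)) * (d i (a i) * d j (a j)) := by
        simp_rw [sq, sum_mul_sum, mul_sum]
        rw [sum_comm]
        exact sum_congr rfl fun i _ => sum_comm
    _ = ∑ i ∈ J, ∑ s, p i s * d i s ^ 2 :=
        sum_congr rfl fun i hi => by simp_rw [cross, sum_ite_eq, if_pos hi]

theorem sum_prod_mul_sum_abs_sum_sub_le (hp : ∀ i, IsProb (p i)) {T : Type*} [Fintype T]
    {g : ι → S → T → ℝ} (hg : ∀ i s, IsProb (g i s)) (J : Finset ι) :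
    ∑ a : ι → S, (∏ i, p i (a i)) * ∑ t, |∑ i ∈ J, (g i (a i) t - ∑ s, p i s * g i s t)|
      ≤ √(Fintype.card T * #J) := by
  set m : ι → T → ℝ := fun i t => ∑ s, p i s * g i s t with hm
  set V : T → ℝ := fun t => ∑ i ∈ J, ∑ s, p i s * (g i s t - m i t) ^ 2
  have hcentered : ∀ t i, ∑ s, p i s * (g i s t - m i t) = 0 := fun t i => by
    simp only [mul_sub, sum_sub_distrib, ← sum_mul, (hp i).2, one_mul, hm, sub_self]
  have hdev : ∀ t, ∑ a : ι → S, (∏ i, p i (a i)) * |∑ i ∈ J, (g i (a i) t - m i t)| ≤ √(V t) :=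
    fun t => (sum_mul_abs_le_sqrt (isProb_prod hp) _).trans_eq
      (congrArg _ (sum_prod_mul_sq_sum (fun i => (hp i).2) (hcentered t) J))
  -- the variance of `g i · t` is at most its mean `m i t`, and these means sum to one over `t`
  have hVsum : ∑ t, V t ≤ #J := calc
    ∑ t, V t ≤ ∑ t, ∑ i ∈ J, m i t := sum_le_sum fun t _ => sum_le_sum fun i _ =>
        sum_mul_sq_sub_le (hp i) (fun s => (hg i s).1 t) (fun s => (hg i s).le_one t)
    _ = ∑ i ∈ J, ∑ s, p i s * ∑ t, g i s t := by
        rw [sum_comm]; simp only [hm, mul_sum]; exact sum_congr rfl fun i _ => sum_comm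
    _ = #J := by simp [(hg _ _).2, (hp _).2]
  calc ∑ a : ι → S, (∏ i, p i (a i)) * ∑ t, |∑ i ∈ J, (g i (a i) t - m i t)|
      = ∑ t, ∑ a : ι → S, (∏ i, p i (a i)) * |∑ i ∈ J, (g i (a i) t - m i t)| := by
        simp only [mul_sum]; exact sum_comm
    _ ≤ ∑ t, √(V t) := sum_le_sum fun t _ => hdev t
    _ ≤ √(Fintype.card T * ∑ t, V t) := sum_sqrt_le_sqrt_card_mul_sum fun t =>
        sum_nonneg fun i _ => sum_nonneg fun s _ => mul_nonneg ((hp i).1 s) (sq_nonneg _)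
    _ ≤ √(Fintype.card T * #J) := by gcongr

end ProductWeight

section Population

variable {K : ℕ} {N : Fin K → ℕ} {Npop : ℝ} {S T : Type*} [Fintype S] [Fintype T]

noncomputable def popAvg (Npop : ℝ) (q : (k : Fin K) → Fin (N k) → T → ℝ) : T × Fin K → ℝ :=
  fun z => (∑ j, q z.2 j z.1) / Npop

def dirac [DecidableEq S] (s : S) : S → ℝ := fun t => if s = t then 1 else 0

noncomputable def empirical [DecidableEq S] (Npop : ℝ) (a : (k : Fin K) → Fin (N k) → S) :
    S × Fin K → ℝ :=
  popAvg Npop fun k j => dirac (a k j)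

theorem isProb_dirac [DecidableEq S] (s : S) : IsProb (dirac s) :=
  ⟨fun t => by unfold dirac; split_ifs <;> norm_num, by simp [dirac]⟩

theorem sum_mul_dirac [DecidableEq S] (f : S → ℝ) (t : S) : ∑ s, f s * dirac s t = f t := by
  simp [dirac]

theorem sum_mul_empirical [DecidableEq S] (a : (k : Fin K) → Fin (N k) → S) (f : S → ℝ)
    (k : Fin K) :
    ∑ s, f s * empirical Npop a (s, k) = (∑ j, f (a k j)) / Npop := by
  change ∑ s, f s * ((∑ j, dirac (a k j) s) / Npop) = _
  simp only [mul_div_assoc', ← sum_div, mul_sum]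
  rw [sum_comm]
  simp [dirac]

theorem isProb_popAvg (hNpop : Npop = ∑ k, (N k : ℝ)) (hpos : 0 < Npop)
    {q : (k : Fin K) → Fin (N k) → T → ℝ} (hq : ∀ k j, IsProb (q k j)) :
    IsProb (popAvg Npop q) := by
  refine ⟨fun z => div_nonneg (sum_nonneg fun j _ => (hq _ j).1 _) hpos.le, ?_⟩
  calc ∑ z, popAvg Npop q z = (∑ k, ∑ j, ∑ t, q k j t) / Npop := by
        rw [Fintype.sum_prod_type_right, sum_div]
        exact sum_congr rfl fun k _ => by rw [sum_comm, sum_div]; rfl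
    _ = 1 := by simp [(hq _ _).2, ← hNpop, hpos.ne']

theorem isProb_empirical [DecidableEq S] (hNpop : Npop = ∑ k, (N k : ℝ)) (hpos : 0 < Npop)
    (a : (k : Fin K) → Fin (N k) → S) : IsProb (empirical Npop a) :=
  isProb_popAvg hNpop hpos fun _ _ => isProb_dirac _

theorem l1_popAvg_le (hNpop : Npop = ∑ k, (N k : ℝ)) (hpos : 0 < Npop)
    {q q' : (k : Fin K) → Fin (N k) → T → ℝ} {c : ℝ} (h : ∀ k j, l1 (q k j) (q' k j) ≤ c) :
    l1 (popAvg Npop q) (popAvg Npop q') ≤ c := by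
  calc l1 (popAvg Npop q) (popAvg Npop q')
      ≤ (∑ k, ∑ j, l1 (q k j) (q' k j)) / Npop := by
        rw [l1, Fintype.sum_prod_type_right, sum_div]
        gcongr with k
        simp only [popAvg, ← sub_div, ← sum_sub_distrib, abs_div, abs_of_pos hpos, ← sum_div, l1]
        rw [sum_comm]
        gcongr
        exact abs_sum_le_sum_abs _ _
    _ ≤ (∑ k, ∑ _j : Fin (N k), c) / Npop := by gcongr with k _ j; exact h k j
    _ = c := by simp [← hNpop, ← sum_mul, hpos.ne']

theorem sum_curried_eq_sum_sigma {F : ((k : Fin K) → Fin (N k) → S) → ℝ} :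
    ∑ a, F a = ∑ a : (Σ k, Fin (N k)) → S, F fun k j => a ⟨k, j⟩ :=
  Fintype.sum_equiv (Equiv.piCurry fun _ _ => S).symm _ _ fun _ => rfl

theorem sum_prod_mul_l1_popAvg_le (hpos : 0 < Npop) {p : (k : Fin K) → Fin (N k) → S → ℝ}
    (hp : ∀ k j, IsProb (p k j)) {g : (k : Fin K) → Fin (N k) → S → T → ℝ}
    (hg : ∀ k j s, IsProb (g k j s)) :
    ∑ a : (k : Fin K) → Fin (N k) → S, (∏ k, ∏ j, p k j (a k j)) *
        l1 (popAvg Npop fun k j => g k j (a k j))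
          (popAvg Npop fun k j t => ∑ s, p k j s * g k j s t)
      ≤ (1 / Npop) * ∑ k, √(Fintype.card T * N k) := by
  let block (k : Fin K) : Finset (Σ k, Fin (N k)) := univ.map (Function.Embedding.sigmaMk k)
  have hl1 : ∀ a : (Σ k, Fin (N k)) → S,
      l1 (popAvg Npop fun k j => g k j (a ⟨k, j⟩))
        (popAvg Npop fun k j t => ∑ s, p k j s * g k j s t)
      = (1 / Npop) * ∑ k, ∑ t,
          |∑ i ∈ block k, (g i.1 i.2 (a i) t - ∑ s, p i.1 i.2 s * g i.1 i.2 s t)| := by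
    intro a
    rw [l1, Fintype.sum_prod_type_right, mul_sum]
    refine sum_congr rfl fun k _ => ?_
    rw [mul_sum]
    refine sum_congr rfl fun t _ => ?_
    dsimp only [popAvg, block]
    rw [sum_map, ← sub_div, ← sum_sub_distrib, abs_div, abs_of_pos hpos, div_eq_inv_mul, one_div]
    rfl
  rw [sum_curried_eq_sum_sigma]
  calc ∑ a : (Σ k, Fin (N k)) → S, (∏ k, ∏ j, p k j (a ⟨k, j⟩)) *
        l1 (popAvg Npop fun k j => g k j (a ⟨k, j⟩))
          (popAvg Npop fun k j t => ∑ s, p k j s * g k j s t)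
      = (1 / Npop) * ∑ k, ∑ a : (Σ k, Fin (N k)) → S, (∏ i, p i.1 i.2 (a i)) * ∑ t,
          |∑ i ∈ block k, (g i.1 i.2 (a i) t - ∑ s, p i.1 i.2 s * g i.1 i.2 s t)| := by
        simp only [hl1, Fintype.prod_sigma, mul_sum]
        rw [sum_comm]
        exact sum_congr rfl fun k _ => sum_congr rfl fun a _ => sum_congr rfl fun t _ => by ring
    _ ≤ (1 / Npop) * ∑ k, √(Fintype.card T * #(block k)) := by
        gcongr with k
        exact sum_prod_mul_sum_abs_sum_sub_le (fun i : Σ k, Fin (N k) => hp i.1 i.2)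
          (fun i s => hg i.1 i.2 s) _
    _ = (1 / Npop) * ∑ k, √(Fintype.card T * N k) := by simp [block]

theorem isProb_prod_prod {p : (k : Fin K) → Fin (N k) → S → ℝ} (hp : ∀ k j, IsProb (p k j)) :
    IsProb fun a : (k : Fin K) → Fin (N k) → S => ∏ k, ∏ j, p k j (a k j) := by
  refine ⟨fun a => prod_nonneg fun k _ => prod_nonneg fun j _ => (hp k j).1 _, ?_⟩
  rw [sum_curried_eq_sum_sigma]
  simpa only [Fintype.prod_sigma] using (isProb_prod fun i : Σ k, Fin (N k) => hp i.1 i.2).2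

theorem sum_prod_mul_l1_empirical_le [DecidableEq S] (hpos : 0 < Npop)
    {p : (k : Fin K) → Fin (N k) → S → ℝ} (hp : ∀ k j, IsProb (p k j)) :
    ∑ a : (k : Fin K) → Fin (N k) → S, (∏ k, ∏ j, p k j (a k j)) *
        l1 (empirical Npop a) (popAvg Npop p)
      ≤ (1 / Npop) * ∑ k, √(Fintype.card S * N k) := by
  simpa only [sum_mul_dirac, empirical] using
    sum_prod_mul_l1_popAvg_le hpos hp (g := fun _ _ => dirac) fun _ _ => isProb_dirac

theorem one_div_mul_sum_sqrt_mul_le (hNpop : 0 ≤ Npop) {c C : ℝ} (hc : 0 ≤ c) (hcC : c ≤ C) :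
    (1 / Npop) * ∑ k, √(c * N k) ≤ √C * ((1 / Npop) * ∑ k, √(N k)) := by
  simp_rw [Real.sqrt_mul hc, ← mul_sum]
  rw [mul_left_comm]
  gcongr

end Population

section TwoStage

variable {K : ℕ} {N : Fin K → ℕ} {Npop : ℝ} {X U : Type*} [Fintype X] [Fintype U]
  [DecidableEq X] [DecidableEq U] {LP : ℝ}
  {κ : (k : Fin K) → Fin (N k) → U → (U × Fin K → ℝ) → X → ℝ}

theorem sum_prod_mul_l1_empirical_le_add (hNpop : Npop = ∑ k, (N k : ℝ)) (hpos : 0 < Npop)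
    (hκ : ∀ k j s ν, IsProb ν → IsProb (κ k j s ν))
    (hκLip : ∀ k j s ν₁ ν₂, IsProb ν₁ → IsProb ν₂ → l1 (κ k j s ν₁) (κ k j s ν₂) ≤ LP * l1 ν₁ ν₂)
    {ν : U × Fin K → ℝ} (hν : IsProb ν) (b : (k : Fin K) → Fin (N k) → U) (target : X × Fin K → ℝ) :
    ∑ a : (k : Fin K) → Fin (N k) → X,
        (∏ k, ∏ j, κ k j (b k j) (empirical Npop b) (a k j)) * l1 (empirical Npop a) target
      ≤ (1 / Npop) * ∑ k, √(Fintype.card X * N k) + LP * l1 (empirical Npop b) ν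
        + l1 (popAvg Npop fun k j => κ k j (b k j) ν) target := by
  have hemp := isProb_empirical hNpop hpos b
  have hκb : ∀ k j, IsProb (κ k j (b k j) (empirical Npop b)) := fun k j => hκ k j _ _ hemp
  set M := popAvg Npop fun k j => κ k j (b k j) (empirical Npop b)
  set M' := popAvg Npop fun k j => κ k j (b k j) ν
  have hsplit := sum_mul_l1_le_add (isProb_prod_prod hκb)
    (fun a : (k : Fin K) → Fin (N k) → X => empirical Npop a) M target
  have hsampling := sum_prod_mul_l1_empirical_le hpos hκb
  have hlip : l1 M M' ≤ LP * l1 (empirical Npop b) ν :=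
    l1_popAvg_le hNpop hpos fun k j => hκLip k j (b k j) _ _ hemp hν
  linarith [l1_triangle M M' target]

theorem sum_twoStage_mul_l1_empirical_le [Nonempty X] [Nonempty U]
    (hNpop : Npop = ∑ k, (N k : ℝ)) (hpos : 0 < Npop) (hLP : 0 ≤ LP)
    {p : (k : Fin K) → Fin (N k) → U → ℝ} (hp : ∀ k j, IsProb (p k j))
    (hκ : ∀ k j s ν, IsProb ν → IsProb (κ k j s ν))
    (hκLip : ∀ k j s ν₁ ν₂, IsProb ν₁ → IsProb ν₂ → l1 (κ k j s ν₁) (κ k j s ν₂) ≤ LP * l1 ν₁ ν₂) :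
    ∑ b : (k : Fin K) → Fin (N k) → U, ∑ a : (k : Fin K) → Fin (N k) → X,
        ((∏ k, ∏ j, p k j (b k j)) * ∏ k, ∏ j, κ k j (b k j) (empirical Npop b) (a k j)) *
          l1 (empirical Npop a) (popAvg Npop fun k j t => ∑ s, p k j s * κ k j s (popAvg Npop p) t)
      ≤ (2 + LP) * √(Fintype.card X * Fintype.card U) * ((1 / Npop) * ∑ k, √(N k)) := by
  set ν := popAvg Npop p
  set target := popAvg Npop fun k j t => ∑ s, p k j s * κ k j s ν t
  have hν : IsProb ν := isProb_popAvg hNpop hpos hp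
  have hW := isProb_prod_prod hp
  have hR : ∀ {c : ℕ}, c ≤ Fintype.card X * Fintype.card U →
      (1 / Npop) * ∑ k, √(c * N k)
        ≤ √(Fintype.card X * Fintype.card U) * ((1 / Npop) * ∑ k, √(N k)) :=
    fun hc => one_div_mul_sum_sqrt_mul_le hpos.le (Nat.cast_nonneg _) (mod_cast hc)
  have hX := hR (Nat.le_mul_of_pos_right _ Fintype.card_pos)
  have hU := hR (Nat.le_mul_of_pos_left _ Fintype.card_pos)
  have hactions := sum_prod_mul_l1_empirical_le hpos hp
  have hmeanField := sum_prod_mul_l1_popAvg_le hpos hp (g := fun k j s => κ k j s ν)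
    fun k j s => hκ k j s ν hν
  set errX := (1 / Npop) * ∑ k, √(Fintype.card X * N k)
  calc _ = ∑ b : (k : Fin K) → Fin (N k) → U, (∏ k, ∏ j, p k j (b k j)) *
        ∑ a : (k : Fin K) → Fin (N k) → X,
          (∏ k, ∏ j, κ k j (b k j) (empirical Npop b) (a k j)) * l1 (empirical Npop a) target := by
        simp only [mul_sum, mul_assoc]
    _ ≤ ∑ b : (k : Fin K) → Fin (N k) → U, (∏ k, ∏ j, p k j (b k j)) *
          (errX + LP * l1 (empirical Npop b) ν
            + l1 (popAvg Npop fun k j => κ k j (b k j) ν) target) :=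
        sum_le_sum fun b _ => mul_le_mul_of_nonneg_left
          (sum_prod_mul_l1_empirical_le_add hNpop hpos hκ hκLip hν b target) (hW.1 b)
    _ = errX + LP * ∑ b : (k : Fin K) → Fin (N k) → U,
            (∏ k, ∏ j, p k j (b k j)) * l1 (empirical Npop b) ν
          + ∑ b : (k : Fin K) → Fin (N k) → U, (∏ k, ∏ j, p k j (b k j)) *
            l1 (popAvg Npop fun k j => κ k j (b k j) ν) target := by
        simp only [mul_add, sum_add_distrib, ← sum_mul, hW.2, one_mul, mul_sum, mul_left_comm LP]
    _ ≤ _ := by nlinarith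

end TwoStage

theorem integral_comp_eq_sum {Ω A : Type*} [MeasurableSpace Ω] (P : Measure Ω) [IsFiniteMeasure P]
    [Fintype A] [MeasurableSpace A] [MeasurableSingletonClass A] {Z : Ω → A} (hZ : Measurable Z)
    (F : A → ℝ) : ∫ ω, F (Z ω) ∂P = ∑ z, P.real (Z ⁻¹' {z}) * F z := by
  rw [← integral_map hZ.aemeasurable (measurable_of_finite F).aestronglyMeasurable,
    integral_fintype .of_finite]
  simp [map_measureReal_apply hZ (measurableSet_singleton _)]

theorem ProbabilityTheory.iIndepFun.measureReal_forall_eq {Ω ι S : Type*} [MeasurableSpace Ω]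
    {P : Measure Ω} [Fintype ι] [MeasurableSpace S] [MeasurableSingletonClass S] {Y : ι → Ω → S}
    (hY : iIndepFun Y P) (b : ι → S) :
    P.real {ω | ∀ i, Y i ω = b i} = ∏ i, P.real {ω | Y i ω = b i} := by
  have : {ω | ∀ i, Y i ω = b i} = ⋂ i, Y i ⁻¹' {b i} := by ext; simp
  rw [this, measureReal_def, hY.meas_iInter fun i => ⟨{b i}, measurableSet_singleton _, rfl⟩,
    ENNReal.toReal_prod]
  rfl

section Sampling

variable {Ω : Type*} [MeasurableSpace Ω] {P : Measure Ω} {K : ℕ} {N : Fin K → ℕ}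
  {X U : Type*} [MeasurableSpace U] [MeasurableSingletonClass U]
  {x' : (k : Fin K) → Fin (N k) → Ω → X} {u : (k : Fin K) → Fin (N k) → Ω → U}

theorem integral_eq_sum_measureReal_joint [IsFiniteMeasure P] [Fintype X] [Fintype U]
    [MeasurableSpace X] [MeasurableSingletonClass X]
    (hx' : ∀ k j, Measurable (x' k j)) (hu : ∀ k j, Measurable (u k j))
    (F : ((k : Fin K) → Fin (N k) → X) → ((k : Fin K) → Fin (N k) → U) → ℝ) :
    ∫ ω, F (fun k j => x' k j ω) (fun k j => u k j ω) ∂P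
      = ∑ b, ∑ a, P.real {ω | (∀ k j, x' k j ω = a k j) ∧ ∀ k j, u k j ω = b k j} * F a b := by
  rw [integral_comp_eq_sum P (Z := fun ω => ((fun k j => x' k j ω), fun k j => u k j ω))
    (by fun_prop) fun z => F z.1 z.2, Fintype.sum_prod_type, sum_comm]
  refine sum_congr rfl fun b _ => sum_congr rfl fun a _ => ?_
  congr 2
  ext ω
  simp [funext_iff]

theorem measureReal_joint_eq (hindep : iIndepFun (fun i : Σ k, Fin (N k) => u i.1 i.2) P)
    {p : (k : Fin K) → Fin (N k) → U → ℝ} (hlaw : ∀ k j s, P.real {ω | u k j ω = s} = p k j s)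
    {Q : ((k : Fin K) → Fin (N k) → U) → ((k : Fin K) → Fin (N k) → X) → ℝ}
    (hQ : ∀ b a, 0 ≤ Q b a)
    (hcond : ∀ a b, P {ω | (∀ k j, x' k j ω = a k j) ∧ ∀ k j, u k j ω = b k j}
      = P {ω | ∀ k j, u k j ω = b k j} * ENNReal.ofReal (Q b a))
    (a : (k : Fin K) → Fin (N k) → X) (b : (k : Fin K) → Fin (N k) → U) :
    P.real {ω | (∀ k j, x' k j ω = a k j) ∧ ∀ k j, u k j ω = b k j}
      = (∏ k, ∏ j, p k j (b k j)) * Q b a := by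
  have hactions := hindep.measureReal_forall_eq fun i => b i.1 i.2
  simp only [Sigma.forall, Fintype.prod_sigma, hlaw] at hactions
  rw [measureReal_def, hcond, ENNReal.toReal_mul, ENNReal.toReal_ofReal (hQ b a), ← measureReal_def,
    hactions]

end Sampling
theorem stmt8_general {Ω : Type*} [MeasurableSpace Ω] (P : Measure Ω) [IsProbabilityMeasure P]
    {X U : Type*} [Fintype X] [Fintype U] [Nonempty X] [Nonempty U]
    [DecidableEq X] [DecidableEq U]
    [MeasurableSpace X] [MeasurableSingletonClass X]
    [MeasurableSpace U] [MeasurableSingletonClass U]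
    (K : ℕ) (hK : 0 < K) (N : Fin K → ℕ) (hN : ∀ k, 0 < N k)
    (Npop : ℝ) (hNpop : Npop = ∑ k, (N k : ℝ))
    (LP : ℝ) (hLP : 0 ≤ LP)
    -- fixed states and their empirical joint distribution
    (x : (k : Fin K) → Fin (N k) → X)
    (μN : X × Fin K → ℝ)
    (hμN : ∀ x0 k, μN (x0, k) = (∑ j, if x k j = x0 then (1 : ℝ) else 0) / Npop)
    -- decision rules
    (pi : Fin K → X → (X × Fin K → ℝ) → U → ℝ)
    (hpiProb : ∀ k x0 μ, IsProb μ → IsProb (pi k x0 μ))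
    -- the random actions: independent, with law `pi k (x k j) μN`
    (u : (k : Fin K) → Fin (N k) → Ω → U)
    (hmeasu : ∀ k j, Measurable (u k j))
    (hulaw : ∀ k j u0, (P {ω | u k j ω = u0}).toReal = pi k (x k j) μN u0)
    (hindep : iIndepFun
      (fun p : Σ k : Fin K, Fin (N k) => u p.1 p.2) P)
    -- transition kernels
    (Pk : Fin K → X → U → (X × Fin K → ℝ) → (U × Fin K → ℝ) → X → ℝ)
    (hPkProb : ∀ k x0 u0 μ ν, IsProb μ → IsProb ν → IsProb (Pk k x0 u0 μ ν))
    (hPkLip : ∀ k x0 u0 μ ν₁ ν₂, IsProb μ → IsProb ν₁ → IsProb ν₂ →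
      l1 (Pk k x0 u0 μ ν₁) (Pk k x0 u0 μ ν₂) ≤ LP * l1 ν₁ ν₂)
    -- the next states: conditionally on the actions, mutually independent with
    -- conditional law `Pk k (x k j) (u k j) μN νN`
    (x' : (k : Fin K) → Fin (N k) → Ω → X)
    (hmeasx' : ∀ k j, Measurable (x' k j))
    (νOf : ((k : Fin K) → Fin (N k) → U) → U × Fin K → ℝ)
    (hνOf : ∀ b u0 k, νOf b (u0, k) = (∑ j, if b k j = u0 then (1 : ℝ) else 0) / Npop)
    (hcond : ∀ (a : (k : Fin K) → Fin (N k) → X) (b : (k : Fin K) → Fin (N k) → U),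
      P {ω | (∀ k j, x' k j ω = a k j) ∧ ∀ k j, u k j ω = b k j}
        = P {ω | ∀ k j, u k j ω = b k j}
          * ENNReal.ofReal (∏ k, ∏ j, Pk k (x k j) (b k j) μN (νOf b) (a k j)))
    -- the empirical distribution of the next states
    (μ'N : Ω → X × Fin K → ℝ)
    (hμ'N : ∀ ω x0 k, μ'N ω (x0, k) = (∑ j, if x' k j ω = x0 then (1 : ℝ) else 0) / Npop)
    -- the mean-field action distribution and state update
    (νMF : U × Fin K → ℝ)
    (hνMF : ∀ u0 k, νMF (u0, k) = ∑ x0, pi k x0 μN u0 * μN (x0, k))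
    (PMFmu : X × Fin K → ℝ)
    (hPMFmu : ∀ x1 k, PMFmu (x1, k) =
      ∑ x0, ∑ u0, μN (x0, k) * pi k x0 μN u0 * Pk k x0 u0 μN νMF x1) :
    ∫ ω, l1 (μ'N ω) PMFmu ∂P
      ≤ (2 + LP) * Real.sqrt ((Fintype.card X : ℝ) * Fintype.card U)
        * ((1 / Npop) * ∑ k, Real.sqrt (N k)) := by
  have hpos : 0 < Npop := hNpop ▸ sum_pos (fun k _ => mod_cast hN k) ⟨⟨0, hK⟩, mem_univ _⟩
  obtain rfl : μN = empirical Npop x := funext fun z => hμN z.1 z.2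
  obtain rfl : νOf = empirical Npop := funext fun b => funext fun z => hνOf b z.1 z.2
  obtain rfl : μ'N = fun ω => empirical Npop fun k j => x' k j ω :=
    funext fun ω => funext fun z => hμ'N ω z.1 z.2
  obtain rfl : PMFmu = popAvg Npop fun k j t =>
      ∑ s, pi k (x k j) (empirical Npop x) s * Pk k (x k j) s (empirical Npop x) νMF t :=
    funext fun z => by
      simp_rw [hPMFmu, mul_assoc, ← mul_sum, mul_comm (empirical Npop x _), sum_mul_empirical]
      rfl
  obtain rfl : νMF = popAvg Npop fun k j => pi k (x k j) (empirical Npop x) := funext fun z => by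
    rw [hνMF, sum_mul_empirical]
    rfl
  have hμ := isProb_empirical hNpop hpos x
  have hκ k j s ν (hν : IsProb ν) := hPkProb k (x k j) s _ ν hμ hν
  rw [integral_eq_sum_measureReal_joint hmeasx' hmeasu fun a _ => l1 (empirical Npop a) _]
  simp only [measureReal_joint_eq hindep hulaw (fun b a => prod_nonneg fun k _ => prod_nonneg
    fun j _ => (hκ k j _ _ (isProb_empirical hNpop hpos b)).1 _) hcond]
  exact sum_twoStage_mul_l1_empirical_le hNpop hpos hLP (fun k j => hpiProb k (x k j) _ hμ)
    (κ := fun k j s ν => Pk k (x k j) s (empirical Npop x) ν) hκ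
    fun k j s ν₁ ν₂ => hPkLip k (x k j) s _ ν₁ ν₂ hμ

theorem stmt8 {Ω : Type*} [MeasurableSpace Ω] (P : Measure Ω) [IsProbabilityMeasure P]
    {X U : Type*} [Fintype X] [Fintype U] [Nonempty X] [Nonempty U]
    [DecidableEq X] [DecidableEq U]
    [MeasurableSpace X] [MeasurableSingletonClass X]
    [MeasurableSpace U] [MeasurableSingletonClass U]
    (K : ℕ) (hK : 0 < K) (N : Fin K → ℕ) (hN : ∀ k, 0 < N k)
    (Npop : ℝ) (hNpop : Npop = ∑ k, (N k : ℝ))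
    (LP : ℝ) (hLP : 0 ≤ LP)
    -- fixed states and their empirical joint distribution
    (x : (k : Fin K) → Fin (N k) → X)
    (μN : X × Fin K → ℝ)
    (hμN : ∀ x0 k, μN (x0, k) = (∑ j, if x k j = x0 then (1 : ℝ) else 0) / Npop)
    -- decision rules
    (pi : Fin K → X → (X × Fin K → ℝ) → U → ℝ)
    (hpiProb : ∀ k x0 μ, IsProb μ → IsProb (pi k x0 μ))
    -- the random actions: independent, with law `pi k (x k j) μN`
    (u : (k : Fin K) → Fin (N k) → Ω → U)
    (hmeasu : ∀ k j, Measurable (u k j))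
    (hulaw : ∀ k j u0, (P {ω | u k j ω = u0}).toReal = pi k (x k j) μN u0)
    (hindep : iIndepFun
      (fun p : Σ k : Fin K, Fin (N k) => u p.1 p.2) P)
    -- random empirical action distribution
    (νN : Ω → U × Fin K → ℝ)
    (hνN : ∀ ω u0 k, νN ω (u0, k) = (∑ j, if u k j ω = u0 then (1 : ℝ) else 0) / Npop)
    -- transition kernels
    (Pk : Fin K → X → U → (X × Fin K → ℝ) → (U × Fin K → ℝ) → X → ℝ)
    (hPkProb : ∀ k x0 u0 μ ν, IsProb μ → IsProb ν → IsProb (Pk k x0 u0 μ ν))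
    (hPkLip : ∀ k x0 u0 μ ν₁ ν₂, IsProb μ → IsProb ν₁ → IsProb ν₂ →
      l1 (Pk k x0 u0 μ ν₁) (Pk k x0 u0 μ ν₂) ≤ LP * l1 ν₁ ν₂)
    -- the next states: conditionally on the actions, mutually independent with
    -- conditional law `Pk k (x k j) (u k j) μN νN`
    (x' : (k : Fin K) → Fin (N k) → Ω → X)
    (hmeasx' : ∀ k j, Measurable (x' k j))
    (νOf : ((k : Fin K) → Fin (N k) → U) → U × Fin K → ℝ)
    (hνOf : ∀ b u0 k, νOf b (u0, k) = (∑ j, if b k j = u0 then (1 : ℝ) else 0) / Npop)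
    (hcond : ∀ (a : (k : Fin K) → Fin (N k) → X) (b : (k : Fin K) → Fin (N k) → U),
      P {ω | (∀ k j, x' k j ω = a k j) ∧ ∀ k j, u k j ω = b k j}
        = P {ω | ∀ k j, u k j ω = b k j}
          * ENNReal.ofReal (∏ k, ∏ j, Pk k (x k j) (b k j) μN (νOf b) (a k j)))
    -- the empirical distribution of the next states
    (μ'N : Ω → X × Fin K → ℝ)
    (hμ'N : ∀ ω x0 k, μ'N ω (x0, k) = (∑ j, if x' k j ω = x0 then (1 : ℝ) else 0) / Npop)
    -- the mean-field action distribution and state update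
    (νMF : U × Fin K → ℝ)
    (hνMF : ∀ u0 k, νMF (u0, k) = ∑ x0, pi k x0 μN u0 * μN (x0, k))
    (PMFmu : X × Fin K → ℝ)
    (hPMFmu : ∀ x1 k, PMFmu (x1, k) =
      ∑ x0, ∑ u0, μN (x0, k) * pi k x0 μN u0 * Pk k x0 u0 μN νMF x1) :
    ∫ ω, l1 (μ'N ω) PMFmu ∂P
      ≤ (2 + LP) * Real.sqrt ((Fintype.card X : ℝ) * Fintype.card U)
        * ((1 / Npop) * ∑ k, Real.sqrt (N k)) :=
  stmt8_general P K hK N hN Npop hNpop LP hLP x μN hμN pi hpiProb u hmeasu hulaw hindep Pk hPkProb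
    hPkLip x' hmeasx' νOf hνOf hcond μ'N hμ'N νMF hνMF PMFmu hPMFmu
end

section
/- Let X and U be finite nonempty sets, K a positive integer, M̄_R, L̄_R, L̄_Q ≥ 0, and let θ_1,...,θ_K ≥ 0 with Σ_k θ_k = 1. Let π̄ = (π̄_k)_{k∈[K]} be decision rules π̄_k : X × P(X)^K → P(U) with |π̄_k(x,μ̄₁) − π̄_k(x,μ̄₂)|₁ ≤ L̄_Q·|μ̄₁ − μ̄₂|₁ for all arguments. Let r̄_k : X × U × P(X)^K × P(U)^K → ℝ satisfy |r̄_k(x,u,μ̄,ν̄)| ≤ M̄_R and |r̄_k(x,u,μ̄₁,ν̄₁) − r̄_k(x,u,μ̄₂,ν̄₂)| ≤ L̄_R·(|μ̄₁ − μ̄₂|₁ + |ν̄₁ − ν̄₂|₁). Define ν̄^MF(μ̄,π̄)(u,k) = Σ_{x∈X} π̄_k(x,μ̄)(u)·μ̄(x,k) and r̄_k^MF(μ̄,π̄) = Σ_{x,u} μ̄(x,k)·π̄_k(x,μ̄)(u)·r̄_k(x,u,μ̄,ν̄^MF(μ̄,π̄)). Then for all μ̄, μ̄' ∈ P(X)^K,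 Σ_{k∈[K]} θ_k·|r̄_k^MF(μ̄,π̄) − r̄_k^MF(μ̄',π̄)| ≤ S̄_R·|μ̄ − μ̄'|₁, where S̄_R = M̄_R·(1+L̄_Q) + L̄_R·(2+K·L̄_Q). -/
open Finset

/-- An element of `P(A)^K`: for each class `k`, the slice `μ (·, k)` is a
probability distribution on `A`. -/
def IsProbK {A : Type*} [Fintype A] {K : ℕ} (μ : A × Fin K → ℝ) : Prop :=
  ∀ k, IsProb (fun a => μ (a, k))

/-!
In class `k` the mean-field reward is the integral of the reward against the joint
state-action law `μ(x,k) π̄_k(x,μ)(u)`, and the mean-field action distribution is the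
action marginal of that law. Passing from `μ̄` to `μ̄'` moves the joint law by at most
`|μ̄(·,k) − μ̄'(·,k)|₁ + L̄_Q |μ̄ − μ̄'|₁` (change the state law, then the kernel), and taking
marginals does not increase L1 distances, so the action distributions move by at most
`(1 + K L̄_Q) |μ̄ − μ̄'|₁`. Splitting the reward difference into a change of law, weighted by
the bound `M̄_R` on `r̄`, and a change of integrand, weighted by its Lipschitz constant `L̄_R`,
gives the per-class bound `S̄_R |μ̄ − μ̄'|₁`, and averaging over `θ` keeps it.
-/

def compProd {A B : Type*} (f : A → ℝ) (g : A → B → ℝ) : A × B → ℝ :=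
  fun p => f p.1 * g p.1 p.2

section L1

variable {A B : Type*} [Fintype A] [Fintype B]

lemma l1_nonneg (μ ν : A → ℝ) : 0 ≤ l1 μ ν :=
  sum_nonneg fun _ _ => abs_nonneg _

lemma l1_prod_eq_sum_l1 (μ ν : A × B → ℝ) :
    l1 μ ν = ∑ b, l1 (fun a => μ (a, b)) (fun a => ν (a, b)) := by
  rw [l1, Fintype.sum_prod_type, sum_comm]
  rfl

lemma l1_slice_le (μ ν : A × B → ℝ) (b : B) :
    l1 (fun a => μ (a, b)) (fun a => ν (a, b)) ≤ l1 μ ν := by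
  rw [l1_prod_eq_sum_l1 μ ν]
  exact single_le_sum (fun b _ => l1_nonneg (fun a => μ (a, b)) (fun a => ν (a, b))) (mem_univ b)

lemma l1_marginal_le_s13 (μ ν : A × B → ℝ) :
    l1 (fun b => ∑ a, μ (a, b)) (fun b => ∑ a, ν (a, b)) ≤ l1 μ ν := by
  rw [l1_prod_eq_sum_l1 μ ν, l1]
  refine sum_le_sum fun b _ => ?_
  rw [← sum_sub_distrib]
  exact abs_sum_le_sum_abs _ _

lemma IsProb.marginal {μ : A × B → ℝ} (h : IsProb μ) : IsProb (fun b => ∑ a, μ (a, b)) :=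
  ⟨fun _ => sum_nonneg fun _ _ => h.1 _, by rw [sum_comm, ← Fintype.sum_prod_type']; exact h.2⟩

lemma IsProb.compProd {f : A → ℝ} {g : A → B → ℝ} (hf : IsProb f) (hg : ∀ a, IsProb (g a)) :
    IsProb (compProd f g) := by
  refine ⟨fun p => mul_nonneg (hf.1 _) ((hg _).1 _), ?_⟩
  simp only [_root_.compProd, Fintype.sum_prod_type, ← mul_sum, (hg _).2, mul_one, hf.2]

lemma l1_compProd_le {f f' : A → ℝ} {g g' : A → B → ℝ} {c : ℝ} (hg : ∀ a, IsProb (g a))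
    (hf' : IsProb f') (hgg' : ∀ a, l1 (g a) (g' a) ≤ c) :
    l1 (compProd f g) (compProd f' g') ≤ l1 f f' + c := by
  have hpt : ∀ a b, |f a * g a b - f' a * g' a b|
      ≤ |f a - f' a| * g a b + f' a * |g a b - g' a b| := by
    intro a b
    calc |f a * g a b - f' a * g' a b|
        = |(f a - f' a) * g a b + f' a * (g a b - g' a b)| := by congr 1; ring
      _ ≤ |(f a - f' a) * g a b| + |f' a * (g a b - g' a b)| := abs_add_le _ _
      _ = |f a - f' a| * g a b + f' a * |g a b - g' a b| := by
        rw [abs_mul, abs_mul, abs_of_nonneg ((hg a).1 b), abs_of_nonneg (hf'.1 a)]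
  calc l1 (compProd f g) (compProd f' g')
      ≤ ∑ a, ∑ b, (|f a - f' a| * g a b + f' a * |g a b - g' a b|) := by
        rw [l1, Fintype.sum_prod_type]
        exact sum_le_sum fun a _ => sum_le_sum fun b _ => hpt a b
    _ = ∑ a, (|f a - f' a| + f' a * l1 (g a) (g' a)) := by
        simp only [sum_add_distrib, ← mul_sum, (hg _).2, mul_one, l1]
    _ ≤ ∑ a, (|f a - f' a| + f' a * c) := by
        gcongr with a
        · exact hf'.1 a
        · exact hgg' a
    _ = l1 f f' + c := by rw [sum_add_distrib, ← sum_mul, hf'.2, one_mul, l1]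

end L1

lemma abs_sum_mul_sub_sum_mul_le {ι : Type*} [Fintype ι] {w w' R R' : ι → ℝ} {M ε : ℝ}
    (hw' : ∀ i, 0 ≤ w' i) (hR : ∀ i, |R i| ≤ M) (hRR' : ∀ i, |R i - R' i| ≤ ε) :
    |∑ i, w i * R i - ∑ i, w' i * R' i| ≤ l1 w w' * M + (∑ i, w' i) * ε := by
  rw [← sum_sub_distrib, l1, sum_mul, sum_mul, ← sum_add_distrib]
  refine (abs_sum_le_sum_abs _ _).trans (sum_le_sum fun i _ => ?_)
  calc |w i * R i - w' i * R' i|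
      = |(w i - w' i) * R i + w' i * (R i - R' i)| := by congr 1; ring
    _ ≤ |w i - w' i| * |R i| + w' i * |R i - R' i| := by
      rw [← abs_mul, ← abs_of_nonneg (hw' i), ← abs_mul, abs_of_nonneg (hw' i)]
      exact abs_add_le _ _
    _ ≤ |w i - w' i| * M + w' i * ε := by
      gcongr
      · exact hR i
      · exact hw' i
      · exact hRR' i

section MeanField

variable {X U : Type*} [Fintype X] {K : ℕ}
  (pi : Fin K → X → (X × Fin K → ℝ) → U → ℝ)

def stateActionLaw (μ : X × Fin K → ℝ) (k : Fin K) : X × U → ℝ :=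
  compProd (fun x => μ (x, k)) (fun x => pi k x μ)

variable {pi} {μ μ' : X × Fin K → ℝ} {nuMF : (X × Fin K → ℝ) → U × Fin K → ℝ}

lemma nuMF_eq_sum_stateActionLaw (hnuMF : ∀ μ u k, nuMF μ (u, k) = ∑ x, pi k x μ u * μ (x, k))
    (μ : X × Fin K → ℝ) (u : U) (k : Fin K) :
    nuMF μ (u, k) = ∑ x, stateActionLaw pi μ k (x, u) := by
  simp only [hnuMF, stateActionLaw, compProd, mul_comm]

variable [Fintype U]

lemma l1_stateActionLaw_le {LQ : ℝ}
    (hpiProb : ∀ k x μ, IsProbK μ → IsProb (pi k x μ))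
    (hpiLip : ∀ k x μ₁ μ₂, IsProbK μ₁ → IsProbK μ₂ →
      l1 (pi k x μ₁) (pi k x μ₂) ≤ LQ * l1 μ₁ μ₂)
    (hμ : IsProbK μ) (hμ' : IsProbK μ') (k : Fin K) :
    l1 (stateActionLaw pi μ k) (stateActionLaw pi μ' k)
      ≤ l1 (fun x => μ (x, k)) (fun x => μ' (x, k)) + LQ * l1 μ μ' :=
  l1_compProd_le (fun x => hpiProb k x μ hμ) (hμ' k) (fun x => hpiLip k x μ μ' hμ hμ')

lemma isProbK_nuMF (hpiProb : ∀ k x μ, IsProbK μ → IsProb (pi k x μ))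
    (hnuMF : ∀ μ u k, nuMF μ (u, k) = ∑ x, pi k x μ u * μ (x, k)) (hμ : IsProbK μ) :
    IsProbK (nuMF μ) := by
  intro k
  simp only [nuMF_eq_sum_stateActionLaw hnuMF]
  exact ((hμ k).compProd fun x => hpiProb k x μ hμ).marginal

lemma l1_nuMF_le {LQ : ℝ}
    (hpiProb : ∀ k x μ, IsProbK μ → IsProb (pi k x μ))
    (hpiLip : ∀ k x μ₁ μ₂, IsProbK μ₁ → IsProbK μ₂ →
      l1 (pi k x μ₁) (pi k x μ₂) ≤ LQ * l1 μ₁ μ₂)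
    (hnuMF : ∀ μ u k, nuMF μ (u, k) = ∑ x, pi k x μ u * μ (x, k))
    (hμ : IsProbK μ) (hμ' : IsProbK μ') :
    l1 (nuMF μ) (nuMF μ') ≤ (1 + K * LQ) * l1 μ μ' := by
  calc l1 (nuMF μ) (nuMF μ')
      = ∑ k, l1 (fun u => ∑ x, stateActionLaw pi μ k (x, u))
          (fun u => ∑ x, stateActionLaw pi μ' k (x, u)) := by
        simp only [l1_prod_eq_sum_l1 (nuMF μ), nuMF_eq_sum_stateActionLaw hnuMF]
    _ ≤ ∑ k, (l1 (fun x => μ (x, k)) (fun x => μ' (x, k)) + LQ * l1 μ μ') :=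
        sum_le_sum fun k _ =>
          (l1_marginal_le_s13 _ _).trans (l1_stateActionLaw_le hpiProb hpiLip hμ hμ' k)
    _ = (1 + K * LQ) * l1 μ μ' := by
        rw [sum_add_distrib, ← l1_prod_eq_sum_l1, sum_const, card_univ, Fintype.card_fin,
          nsmul_eq_mul]
        ring

lemma abs_rMF_sub_le {MR LR : ℝ}
    (hpiProb : ∀ k x μ, IsProbK μ → IsProb (pi k x μ))
    {r : Fin K → X → U → (X × Fin K → ℝ) → (U × Fin K → ℝ) → ℝ}
    (hrBdd : ∀ k x u μ ν, IsProbK μ → IsProbK ν → |r k x u μ ν| ≤ MR)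
    (hrLip : ∀ k x u μ₁ ν₁ μ₂ ν₂, IsProbK μ₁ → IsProbK ν₁ → IsProbK μ₂ → IsProbK ν₂ →
      |r k x u μ₁ ν₁ - r k x u μ₂ ν₂| ≤ LR * (l1 μ₁ μ₂ + l1 ν₁ ν₂))
    (hnuMF : ∀ μ u k, nuMF μ (u, k) = ∑ x, pi k x μ u * μ (x, k))
    {rMF : (X × Fin K → ℝ) → Fin K → ℝ}
    (hrMF : ∀ μ k, rMF μ k = ∑ x, ∑ u, μ (x, k) * pi k x μ u * r k x u μ (nuMF μ))
    (hμ : IsProbK μ) (hμ' : IsProbK μ') (k : Fin K) :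
    |rMF μ k - rMF μ' k|
      ≤ l1 (stateActionLaw pi μ k) (stateActionLaw pi μ' k) * MR
        + LR * (l1 μ μ' + l1 (nuMF μ) (nuMF μ')) := by
  have hrMF' : ∀ σ, rMF σ k = ∑ p, stateActionLaw pi σ k p * r k p.1 p.2 σ (nuMF σ) := by
    intro σ
    rw [hrMF, Fintype.sum_prod_type]
    rfl
  have hlaw' : IsProb (stateActionLaw pi μ' k) :=
    (hμ' k).compProd fun x => hpiProb k x μ' hμ'
  have hν := isProbK_nuMF hpiProb hnuMF hμ
  have hν' := isProbK_nuMF hpiProb hnuMF hμ'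
  rw [hrMF', hrMF']
  refine (abs_sum_mul_sub_sum_mul_le hlaw'.1 (fun p => hrBdd _ _ _ _ _ hμ hν)
    (fun p => hrLip _ _ _ _ _ _ _ hμ hν hμ' hν')).trans_eq ?_
  rw [hlaw'.2, one_mul]

end MeanField

theorem stmt13_general
    {X U : Type*} [Fintype X] [Fintype U]
    (K : ℕ)
    (MR LR LQ : ℝ) (hMR : 0 ≤ MR) (hLR : 0 ≤ LR)
    (θ : Fin K → ℝ) (hθ0 : ∀ k, 0 ≤ θ k) (hθ1 : ∑ k, θ k = 1)
    (pi : Fin K → X → (X × Fin K → ℝ) → U → ℝ)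
    (hpiProb : ∀ k x μ, IsProbK μ → IsProb (pi k x μ))
    (hpiLip : ∀ k x μ₁ μ₂, IsProbK μ₁ → IsProbK μ₂ →
      l1 (pi k x μ₁) (pi k x μ₂) ≤ LQ * l1 μ₁ μ₂)
    (r : Fin K → X → U → (X × Fin K → ℝ) → (U × Fin K → ℝ) → ℝ)
    (hrBdd : ∀ k x u μ ν, IsProbK μ → IsProbK ν → |r k x u μ ν| ≤ MR)
    (hrLip : ∀ k x u μ₁ ν₁ μ₂ ν₂, IsProbK μ₁ → IsProbK ν₁ → IsProbK μ₂ → IsProbK ν₂ →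
      |r k x u μ₁ ν₁ - r k x u μ₂ ν₂| ≤ LR * (l1 μ₁ μ₂ + l1 ν₁ ν₂))
    (nuMF : (X × Fin K → ℝ) → U × Fin K → ℝ)
    (hnuMF : ∀ μ u k, nuMF μ (u, k) = ∑ x, pi k x μ u * μ (x, k))
    (rMF : (X × Fin K → ℝ) → Fin K → ℝ)
    (hrMF : ∀ μ k, rMF μ k = ∑ x, ∑ u, μ (x, k) * pi k x μ u * r k x u μ (nuMF μ))
    (μ μ' : X × Fin K → ℝ) (hμ : IsProbK μ) (hμ' : IsProbK μ') :
    ∑ k, θ k * |rMF μ k - rMF μ' k|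
      ≤ (MR * (1 + LQ) + LR * (2 + (K : ℝ) * LQ)) * l1 μ μ' := by
  set S := MR * (1 + LQ) + LR * (2 + (K : ℝ) * LQ)
  have hclass : ∀ k, |rMF μ k - rMF μ' k| ≤ S * l1 μ μ' := by
    intro k
    have hlaw := (l1_stateActionLaw_le hpiProb hpiLip hμ hμ' k).trans
      (add_le_add_left (l1_slice_le μ μ' k) _)
    have hnu := l1_nuMF_le hpiProb hpiLip hnuMF hμ hμ'
    calc |rMF μ k - rMF μ' k|
        ≤ l1 (stateActionLaw pi μ k) (stateActionLaw pi μ' k) * MR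
          + LR * (l1 μ μ' + l1 (nuMF μ) (nuMF μ')) :=
          abs_rMF_sub_le hpiProb hrBdd hrLip hnuMF hrMF hμ hμ' k
      _ ≤ (l1 μ μ' + LQ * l1 μ μ') * MR + LR * (l1 μ μ' + (1 + K * LQ) * l1 μ μ') := by
          gcongr
      _ = S * l1 μ μ' := by ring
  calc ∑ k, θ k * |rMF μ k - rMF μ' k| ≤ ∑ k, θ k * (S * l1 μ μ') :=
        sum_le_sum fun k _ => mul_le_mul_of_nonneg_left (hclass k) (hθ0 k)
    _ = S * l1 μ μ' := by rw [← sum_mul, hθ1, one_mul]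

theorem stmt13
    {X U : Type*} [Fintype X] [Fintype U] [Nonempty X] [Nonempty U]
    (K : ℕ) (hK : 0 < K)
    (MR LR LQ : ℝ) (hMR : 0 ≤ MR) (hLR : 0 ≤ LR) (hLQ : 0 ≤ LQ)
    (θ : Fin K → ℝ) (hθ0 : ∀ k, 0 ≤ θ k) (hθ1 : ∑ k, θ k = 1)
    (pi : Fin K → X → (X × Fin K → ℝ) → U → ℝ)
    (hpiProb : ∀ k x μ, IsProbK μ → IsProb (pi k x μ))
    (hpiLip : ∀ k x μ₁ μ₂, IsProbK μ₁ → IsProbK μ₂ →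
      l1 (pi k x μ₁) (pi k x μ₂) ≤ LQ * l1 μ₁ μ₂)
    (r : Fin K → X → U → (X × Fin K → ℝ) → (U × Fin K → ℝ) → ℝ)
    (hrBdd : ∀ k x u μ ν, IsProbK μ → IsProbK ν → |r k x u μ ν| ≤ MR)
    (hrLip : ∀ k x u μ₁ ν₁ μ₂ ν₂, IsProbK μ₁ → IsProbK ν₁ → IsProbK μ₂ → IsProbK ν₂ →
      |r k x u μ₁ ν₁ - r k x u μ₂ ν₂| ≤ LR * (l1 μ₁ μ₂ + l1 ν₁ ν₂))
    (nuMF : (X × Fin K → ℝ) → U × Fin K → ℝ)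
    (hnuMF : ∀ μ u k, nuMF μ (u, k) = ∑ x, pi k x μ u * μ (x, k))
    (rMF : (X × Fin K → ℝ) → Fin K → ℝ)
    (hrMF : ∀ μ k, rMF μ k = ∑ x, ∑ u, μ (x, k) * pi k x μ u * r k x u μ (nuMF μ))
    (μ μ' : X × Fin K → ℝ) (hμ : IsProbK μ) (hμ' : IsProbK μ') :
    ∑ k, θ k * |rMF μ k - rMF μ' k|
      ≤ (MR * (1 + LQ) + LR * (2 + (K : ℝ) * LQ)) * l1 μ μ' :=
  stmt13_general K MR LR LQ hMR hLR θ hθ0 hθ1 pi hpiProb hpiLip r hrBdd hrLip nuMF hnuMF rMF hrMF μ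
    μ' hμ hμ'
end

section
/- Let X and U be finite nonempty sets, K a positive integer, and L_Q ≥ 0. Let π = (π_k)_{k∈[K]} be decision rules of the form π_k : X × P(X) → P(U) (depending only on the marginal state distribution) with |π_k(x,m₁) − π_k(x,m₂)|₁ ≤ L_Q·|m₁ − m₂|₁ for all x ∈ X, k ∈ [K], m₁, m₂ ∈ P(X). For μ ∈ P(X×[K]), let μ[X] ∈ P(X) denote the marginal μ[X](x) = Σ_k μ(x,k), define ν^MF(μ,π)(u,k) = Σ_x π_k(x,μ[X])(u)·μ(x,k) ∈ P(U×[K]), and let ν^MF(μ,π)[U] be its marginal on U. Then for all μ, μ' ∈ P(X×[K]): |ν^MF(μ,π)[U] − ν^MF(μ',π)[U]|₁ ≤ |ν^MF(μ,π) − ν^MF(μ',π)|₁ ≤ |μ − μ'|₁ + L_Q·|μ[X] − μ'[X]|₁. -/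
open Finset

/-- The marginal on `A` of a distribution on `A × Fin K`. -/
def marg {A : Type*} [Fintype A] {K : ℕ} (μ : A × Fin K → ℝ) : A → ℝ :=
  fun a => ∑ k, μ (a, k)

/-
Splitting `p x u * w x - q x u * w' x = p x u * (w x - w' x) + (p x u - q x u) * w' x`
bounds the change of the mixture `∑ₓ p x · w x` by the change of the weights (each `p x`
has total mass one) plus the change of the kernels averaged against `w'`. Applied for each
action index `k`, the first part sums to `|μ - μ'|₁` and the second, by the Lipschitz
property of the decision rules in the marginal, to at most `L_Q · |μ[X] - μ'[X]|₁`. The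
bound on the `U`-marginal is the triangle inequality.
-/

theorem IsProb.marg {A : Type*} [Fintype A] {K : ℕ} {μ : A × Fin K → ℝ} (hμ : IsProb μ) :
    IsProb (marg μ) :=
  ⟨fun _ => sum_nonneg fun _ _ => hμ.1 _, by rw [← hμ.2, Fintype.sum_prod_type]; rfl⟩

theorem l1_eq_sum_l1_slice {A : Type*} [Fintype A] {K : ℕ} (μ ν : A × Fin K → ℝ) :
    l1 μ ν = ∑ k, l1 (fun a => μ (a, k)) (fun a => ν (a, k)) := by
  rw [l1, Fintype.sum_prod_type_right]
  rfl

theorem l1_marg_le {A : Type*} [Fintype A] {K : ℕ} (μ ν : A × Fin K → ℝ) :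
    l1 (marg μ) (marg ν) ≤ l1 μ ν := by
  rw [l1, l1, Fintype.sum_prod_type]
  refine sum_le_sum fun a _ => ?_
  rw [marg, marg, ← sum_sub_distrib]
  exact abs_sum_le_sum_abs _ _

theorem l1_mixture_le_s15 {X U : Type*} [Fintype X] [Fintype U] (p q : X → U → ℝ)
    (w w' : X → ℝ) (C : ℝ) (hp : ∀ x, IsProb (p x)) (hw' : ∀ x, 0 ≤ w' x)
    (hpq : ∀ x, l1 (p x) (q x) ≤ C) :
    l1 (fun u => ∑ x, p x u * w x) (fun u => ∑ x, q x u * w' x)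
      ≤ l1 w w' + C * ∑ x, w' x := by
  have hsplit : ∀ u x, |p x u * w x - q x u * w' x|
      ≤ p x u * |w x - w' x| + |p x u - q x u| * w' x := by
    intro u x
    calc |p x u * w x - q x u * w' x|
        = |p x u * (w x - w' x) + (p x u - q x u) * w' x| := by ring_nf
      _ ≤ |p x u * (w x - w' x)| + |(p x u - q x u) * w' x| := abs_add_le _ _
      _ = p x u * |w x - w' x| + |p x u - q x u| * w' x := by
        rw [abs_mul, abs_mul, abs_of_nonneg ((hp x).1 u), abs_of_nonneg (hw' x)]
  calc l1 (fun u => ∑ x, p x u * w x) (fun u => ∑ x, q x u * w' x)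
      ≤ ∑ u, ∑ x, (p x u * |w x - w' x| + |p x u - q x u| * w' x) := by
        refine sum_le_sum fun u _ => ?_
        rw [← sum_sub_distrib]
        exact (abs_sum_le_sum_abs _ _).trans (sum_le_sum fun x _ => hsplit u x)
    _ = ∑ x, |w x - w' x| + ∑ x, l1 (p x) (q x) * w' x := by
        rw [sum_comm, ← sum_add_distrib]
        refine sum_congr rfl fun x _ => ?_
        rw [sum_add_distrib, ← sum_mul, (hp x).2, one_mul, l1, sum_mul]
    _ ≤ l1 w w' + C * ∑ x, w' x := by
        rw [l1, mul_sum]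
        gcongr with x
        exacts [hw' x, hpq x]

theorem stmt15_general
    {X U : Type*} [Fintype X] [Fintype U]
    (K : ℕ) (LQ : ℝ)
    (pi : Fin K → X → (X → ℝ) → U → ℝ)
    (hpiProb : ∀ k x m, IsProb m → IsProb (pi k x m))
    (hpiLip : ∀ k x m₁ m₂, IsProb m₁ → IsProb m₂ →
      l1 (pi k x m₁) (pi k x m₂) ≤ LQ * l1 m₁ m₂)
    (nuMF : (X × Fin K → ℝ) → U × Fin K → ℝ)
    (hnuMF : ∀ μ u k, nuMF μ (u, k) = ∑ x, pi k x (marg μ) u * μ (x, k))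
    (μ μ' : X × Fin K → ℝ) (hμ : IsProb μ) (hμ' : IsProb μ') :
    l1 (marg (nuMF μ)) (marg (nuMF μ')) ≤ l1 (nuMF μ) (nuMF μ') ∧
      l1 (nuMF μ) (nuMF μ') ≤ l1 μ μ' + LQ * l1 (marg μ) (marg μ') := by
  refine ⟨l1_marg_le _ _, ?_⟩
  have hslice : ∀ k, l1 (fun u => nuMF μ (u, k)) (fun u => nuMF μ' (u, k))
      ≤ l1 (fun x => μ (x, k)) (fun x => μ' (x, k))
        + LQ * l1 (marg μ) (marg μ') * ∑ x, μ' (x, k) := by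
    intro k
    simp only [hnuMF]
    exact l1_mixture_le_s15 _ _ _ _ _ (fun x => hpiProb k x _ hμ.marg) (fun x => hμ'.1 _)
      (fun x => hpiLip k x _ _ hμ.marg hμ'.marg)
  have hmass : ∑ k, ∑ x, μ' (x, k) = 1 := by
    rw [← Fintype.sum_prod_type_right, hμ'.2]
  calc l1 (nuMF μ) (nuMF μ')
      ≤ ∑ k, (l1 (fun x => μ (x, k)) (fun x => μ' (x, k))
          + LQ * l1 (marg μ) (marg μ') * ∑ x, μ' (x, k)) := by
        rw [l1_eq_sum_l1_slice]
        exact sum_le_sum fun k _ => hslice k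
    _ = l1 μ μ' + LQ * l1 (marg μ) (marg μ') := by
        rw [sum_add_distrib, ← mul_sum, hmass, mul_one, ← l1_eq_sum_l1_slice]

theorem stmt15
    {X U : Type*} [Fintype X] [Fintype U] [Nonempty X] [Nonempty U]
    (K : ℕ) (hK : 0 < K) (LQ : ℝ) (hLQ : 0 ≤ LQ)
    (pi : Fin K → X → (X → ℝ) → U → ℝ)
    (hpiProb : ∀ k x m, IsProb m → IsProb (pi k x m))
    (hpiLip : ∀ k x m₁ m₂, IsProb m₁ → IsProb m₂ →
      l1 (pi k x m₁) (pi k x m₂) ≤ LQ * l1 m₁ m₂)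
    (nuMF : (X × Fin K → ℝ) → U × Fin K → ℝ)
    (hnuMF : ∀ μ u k, nuMF μ (u, k) = ∑ x, pi k x (marg μ) u * μ (x, k))
    (μ μ' : X × Fin K → ℝ) (hμ : IsProb μ) (hμ' : IsProb μ') :
    l1 (marg (nuMF μ)) (marg (nuMF μ')) ≤ l1 (nuMF μ) (nuMF μ') ∧
      l1 (nuMF μ) (nuMF μ') ≤ l1 μ μ' + LQ * l1 (marg μ) (marg μ') :=
  stmt15_general K LQ pi hpiProb hpiLip nuMF hnuMF μ μ' hμ hμ'
end

section
/- Let U be a finite nonempty set, K a positive integer, and N_1,...,N_K positive integers. For each k ∈ [K] and j ∈ [N_k], let u_{j,k} be a U-valued random variable on a common probability space, and assume the family (u_{j,k})_{j∈[N_k], k∈[K]} is mutually independent. Define the classwise empirical distribution ν̄^N(u,k) = (1/N_k)·Σ_{j=1}^{N_k} 1{u_{j,k} = u} and its mean ν̂(u,k) = (1/N_k)·Σ_{j=1}^{N_k} P(u_{j,k} = u). Then E[ Σ_{k∈[K]} Σ_{u∈U} |ν̄^N(u,k) − ν̂(u,k)| ] ≤ (Σ_{k∈[K]} 1/√N_k)·√|U|.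 -/
/-!
Fix a class `k` and a value `a`. The count `S = ∑ⱼ 1{u_{j,k} = a}` is a sum of pairwise
independent indicators, so `E|S - E S| ≤ √(Var S) ≤ √(∑ⱼ P(u_{j,k} = a))`. Summing over `a`
and applying Cauchy–Schwarz with `∑ₐ ∑ⱼ P(u_{j,k} = a) = N_k` bounds the class-`k` term by
`√(|U| N_k) / N_k = √|U| / √N_k`.
-/

open MeasureTheory ProbabilityTheory Finset

section
variable {Ω : Type*} [MeasurableSpace Ω] {P : Measure Ω} [IsProbabilityMeasure P]

lemma integral_abs_sub_integral_le_sqrt_variance_s18 {X : Ω → ℝ} (hX : MemLp X 2 P) :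
    ∫ ω, |X ω - P[X]| ∂P ≤ √(Var[X; P]) := by
  have hdev : MemLp (fun ω ↦ |X ω - P[X]|) 2 P := (hX.sub (memLp_const _)).abs
  -- `(E|Y|)² ≤ E[Y²]` for `Y = X - E X` is the nonnegativity of `Var |Y|`.
  have h := variance_nonneg (fun ω ↦ |X ω - P[X]|) P
  rw [variance_eq_sub hdev] at h
  rw [variance_eq_integral hX.aemeasurable]
  refine Real.le_sqrt_of_sq_le ?_
  simpa only [Pi.pow_apply, sq_abs, sub_nonneg] using h

lemma variance_indicator_one_le {s : Set Ω} (hs : MeasurableSet s) :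
    Var[s.indicator 1; P] ≤ P.real s := by
  have hbound : ∀ ω, s.indicator (1 : Ω → ℝ) ω ∈ Set.Icc 0 1 := fun ω ↦ by
    by_cases h : ω ∈ s <;> simp [h]
  have h :=
    variance_le_sub_mul_sub (ae_of_all P hbound) (measurable_one.indicator hs).aemeasurable
  rw [integral_indicator_one hs] at h
  nlinarith [sq_nonneg (P.real s)]

end

section
variable {Ω ι U : Type*} [MeasurableSpace Ω] {P : Measure Ω} [Fintype ι] {Y : ι → Ω → U}

lemma sum_abs_empirical_sub_mean_eq [Fintype U] [DecidableEq U] (ω : Ω) :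
    ∑ a, |(∑ j, if Y j ω = a then (1 : ℝ) else 0) / Fintype.card ι
        - (∑ j, (P {ω | Y j ω = a}).toReal) / Fintype.card ι|
      = (∑ a, |∑ j, (Y j ⁻¹' {a}).indicator 1 ω - ∑ j, P.real (Y j ⁻¹' {a})|)
        / Fintype.card ι := by
  rw [sum_div]
  refine sum_congr rfl fun a _ ↦ ?_
  rw [← sub_div, abs_div, Nat.abs_cast]
  simp [Set.indicator_apply, measureReal_def, Set.preimage]

variable [IsProbabilityMeasure P] [MeasurableSpace U] [MeasurableSingletonClass U]

lemma integrable_abs_sum_indicator_preimage_sub (hY : ∀ j, Measurable (Y j)) (a : U) (c : ℝ) :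
    Integrable (fun ω ↦ |∑ j, (Y j ⁻¹' {a}).indicator (1 : Ω → ℝ) ω - c|) P :=
  ((integrable_finsetSum _ fun j _ ↦
    (integrable_const 1).indicator (hY j (measurableSet_singleton a))).sub
      (integrable_const c)).abs

lemma variance_sum_indicator_preimage_le (hY : ∀ j, Measurable (Y j))
    (hindep : Pairwise fun i j ↦ IndepFun (Y i) (Y j) P) (a : U) :
    Var[∑ j, (Y j ⁻¹' {a}).indicator 1; P] ≤ ∑ j, P.real (Y j ⁻¹' {a}) := by
  have hind : Measurable (({a} : Set U).indicator (1 : U → ℝ)) :=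
    measurable_one.indicator (measurableSet_singleton a)
  rw [IndepFun.variance_sum (X := fun j ↦ (Y j ⁻¹' {a}).indicator 1)
    (fun j _ ↦ memLp_indicator_const 2 (hY j (measurableSet_singleton a)) 1
      (.inr (measure_ne_top _ _)))
    fun i _ j _ hij ↦ (hindep hij).comp hind hind]
  exact sum_le_sum fun j _ ↦ variance_indicator_one_le (hY j (measurableSet_singleton a))

lemma integral_abs_sum_indicator_preimage_sub_le (hY : ∀ j, Measurable (Y j))
    (hindep : Pairwise fun i j ↦ IndepFun (Y i) (Y j) P) (a : U) :
    ∫ ω, |∑ j, (Y j ⁻¹' {a}).indicator 1 ω - ∑ j, P.real (Y j ⁻¹' {a})| ∂P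
      ≤ √(∑ j, P.real (Y j ⁻¹' {a})) := by
  have hmeas j : MeasurableSet (Y j ⁻¹' {a}) := hY j (measurableSet_singleton a)
  have hmean :
      P[∑ j, (Y j ⁻¹' {a}).indicator (1 : Ω → ℝ)] = ∑ j, P.real (Y j ⁻¹' {a}) := by
    simp only [Finset.sum_apply]
    rw [integral_finsetSum _ fun j _ ↦ (integrable_const 1).indicator (hmeas j)]
    exact sum_congr rfl fun j _ ↦ integral_indicator_one (hmeas j)
  have hS : MemLp (∑ j, (Y j ⁻¹' {a}).indicator (1 : Ω → ℝ)) 2 P :=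
    memLp_finsetSum' _ fun j _ ↦
      memLp_indicator_const 2 (hmeas j) 1 (.inr (measure_ne_top _ _))
  have h := integral_abs_sub_integral_le_sqrt_variance_s18 hS
  rw [hmean] at h
  simp only [Finset.sum_apply] at h
  exact h.trans (Real.sqrt_le_sqrt (variance_sum_indicator_preimage_le hY hindep a))

variable [Fintype U]

lemma sum_sqrt_sum_measureReal_preimage_le (hY : ∀ j, Measurable (Y j)) :
    ∑ a, √(∑ j, P.real (Y j ⁻¹' {a})) ≤ √(Fintype.card U) * √(Fintype.card ι) := by
  have htotal : ∑ a, ∑ j, P.real (Y j ⁻¹' {a}) = Fintype.card ι := by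
    rw [sum_comm]
    simp [sum_measureReal_preimage_singleton _ (fun a _ ↦ hY _ (measurableSet_singleton a))
      fun _ _ ↦ measure_ne_top _ _]
  simpa [htotal] using Real.sum_sqrt_mul_sqrt_le univ (f := fun _ ↦ 1)
    (g := fun a ↦ ∑ j, P.real (Y j ⁻¹' {a})) (fun _ ↦ zero_le_one) fun _ ↦ by positivity

variable [DecidableEq U]

lemma integrable_sum_abs_empirical_sub_mean (hY : ∀ j, Measurable (Y j)) :
    Integrable (fun ω ↦ ∑ a, |(∑ j, if Y j ω = a then (1 : ℝ) else 0) / Fintype.card ι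
        - (∑ j, (P {ω | Y j ω = a}).toReal) / Fintype.card ι|) P := by
  simp only [sum_abs_empirical_sub_mean_eq]
  exact (integrable_finsetSum _ fun a _ ↦
    integrable_abs_sum_indicator_preimage_sub hY a _).div_const _

lemma integral_sum_abs_empirical_sub_mean_le (hY : ∀ j, Measurable (Y j))
    (hindep : Pairwise fun i j ↦ IndepFun (Y i) (Y j) P) :
    ∫ ω, ∑ a, |(∑ j, if Y j ω = a then (1 : ℝ) else 0) / Fintype.card ι
        - (∑ j, (P {ω | Y j ω = a}).toReal) / Fintype.card ι| ∂P
      ≤ 1 / √(Fintype.card ι) * √(Fintype.card U) := by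
  simp only [sum_abs_empirical_sub_mean_eq]
  rw [integral_div, integral_finsetSum _ fun a _ ↦
    integrable_abs_sum_indicator_preimage_sub hY a _]
  calc (∑ a, ∫ ω, |∑ j, (Y j ⁻¹' {a}).indicator 1 ω - ∑ j, P.real (Y j ⁻¹' {a})| ∂P) /
        Fintype.card ι
      ≤ (∑ a, √(∑ j, P.real (Y j ⁻¹' {a}))) / Fintype.card ι := by
        gcongr with a
        exact integral_abs_sum_indicator_preimage_sub_le hY hindep a
    _ ≤ √(Fintype.card U) * √(Fintype.card ι) / Fintype.card ι := by
        gcongr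
        exact sum_sqrt_sum_measureReal_preimage_le hY
    _ = 1 / √(Fintype.card ι) * √(Fintype.card U) := by
        rw [mul_div_assoc, Real.sqrt_div_self', mul_comm]

end

theorem stmt18_general {Ω : Type*} [MeasurableSpace Ω] (P : Measure Ω) [IsProbabilityMeasure P]
    {U : Type*} [Fintype U] [DecidableEq U]
    [MeasurableSpace U] [MeasurableSingletonClass U]
    (K : ℕ) (N : Fin K → ℕ)
    (u : (k : Fin K) → Fin (N k) → Ω → U)
    (hmeas : ∀ k j, Measurable (u k j))
    (hindep : iIndepFun
      (fun p : Σ k : Fin K, Fin (N k) => u p.1 p.2) P)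
    (νN : Ω → U × Fin K → ℝ)
    (hνN : ∀ ω u0 k, νN ω (u0, k) = (∑ j, if u k j ω = u0 then (1 : ℝ) else 0) / (N k : ℝ))
    (νhat : U × Fin K → ℝ)
    (hνhat : ∀ u0 k, νhat (u0, k) = (∑ j, (P {ω | u k j ω = u0}).toReal) / (N k : ℝ)) :
    ∫ ω, ∑ k, ∑ u0 : U, |νN ω (u0, k) - νhat (u0, k)| ∂P
      ≤ (∑ k, 1 / Real.sqrt (N k)) * Real.sqrt (Fintype.card U) := by
  have hpairwise (k : Fin K) : Pairwise fun i j ↦ IndepFun (u k i) (u k j) P :=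
    fun i j hij ↦ hindep.indepFun (sigma_mk_injective.ne hij)
  simp only [hνN, hνhat]
  rw [integral_finsetSum _ fun k _ ↦ by
    simpa using integrable_sum_abs_empirical_sub_mean (P := P) (hmeas k), sum_mul]
  exact sum_le_sum fun k _ ↦ by
    simpa using integral_sum_abs_empirical_sub_mean_le (hmeas k) (hpairwise k)

theorem stmt18 {Ω : Type*} [MeasurableSpace Ω] (P : Measure Ω) [IsProbabilityMeasure P]
    {U : Type*} [Fintype U] [Nonempty U] [DecidableEq U]
    [MeasurableSpace U] [MeasurableSingletonClass U]
    (K : ℕ) (hK : 0 < K) (N : Fin K → ℕ) (hN : ∀ k, 0 < N k)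
    (u : (k : Fin K) → Fin (N k) → Ω → U)
    (hmeas : ∀ k j, Measurable (u k j))
    (hindep : iIndepFun
      (fun p : Σ k : Fin K, Fin (N k) => u p.1 p.2) P)
    (νN : Ω → U × Fin K → ℝ)
    (hνN : ∀ ω u0 k, νN ω (u0, k) = (∑ j, if u k j ω = u0 then (1 : ℝ) else 0) / (N k : ℝ))
    (νhat : U × Fin K → ℝ)
    (hνhat : ∀ u0 k, νhat (u0, k) = (∑ j, (P {ω | u k j ω = u0}).toReal) / (N k : ℝ)) :
    ∫ ω, ∑ k, ∑ u0 : U, |νN ω (u0, k) - νhat (u0, k)| ∂P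
      ≤ (∑ k, 1 / Real.sqrt (N k)) * Real.sqrt (Fintype.card U) :=
  stmt18_general P K N u hmeas hindep νN hνN νhat hνhat
end
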